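/- arXiv:1310.4188 — 11 statements merged into one kernel-verified Lean document; each statement's English description precedes it below -/
import Mathlib

section
/- For every integer n ≥ 1 and every vector x = (x₁,…,xₙ) ∈ ℝⁿ, we have x₁² + Σ_{i=1}^{n−1} (x_{i+1} − x_i)² + xₙ² ≥ (1/n²)·‖x‖₂². (Equivalently, the minimum of x₁² + Σ_{i=1}^{n−1}(x_{i+1} − x_i)² + xₙ² over the unit sphere ‖x‖₂ = 1 is at least 1/n².) -/
/-- For every integer `n ≥ 1` (encoded as `n+1` coordinates) and every
vector `x ∈ ℝⁿ`, we have
`x₁² + Σ_{i=1}^{n-1} (x_{i+1} - x_i)² + xₙ² ≥ (1/n²)·‖x‖₂²`. -/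
theorem stmt0 (n : ℕ) (x : EuclideanSpace ℝ (Fin (n + 1))) :
    (x 0) ^ 2 + (∑ i : Fin n, (x i.succ - x i.castSucc) ^ 2) + (x (Fin.last n)) ^ 2
      ≥ (1 / ((n : ℝ) + 1) ^ 2) * ‖x‖ ^ 2 := by
  classical
  -- padded coordinate function
  set f : ℕ → ℝ := fun k => x ⟨min k n, by omega⟩ with hf
  -- cumulative function, h 0 = 0, h (k+1) = f k
  set h : ℕ → ℝ := fun k => match k with | 0 => 0 | (k+1) => f k with hh
  set d : ℕ → ℝ := fun i => h (i + 1) - h i with hd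
  have htel : ∀ j : ℕ, ∑ i ∈ Finset.range (j + 1), d i = f j := by
    intro j
    simp only [hd]
    rw [Finset.sum_range_sub h (j + 1)]
    simp [hh]
  -- sum of squares of increments
  set D : ℝ := ∑ i ∈ Finset.range (n + 1), d i ^ 2 with hD
  have hDeq : D = (x 0) ^ 2 + ∑ i : Fin n, (x i.succ - x i.castSucc) ^ 2 := by
    rw [hD, Finset.sum_range_succ']
    have h0 : d 0 ^ 2 = (x 0) ^ 2 := by
      have : d 0 = x 0 := by
        show f 0 - 0 = x 0
        rw [sub_zero, hf]
        exact congrArg x (Fin.ext (by simp))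
      rw [this]
    rw [h0]
    rw [add_comm]
    congr 1
    rw [Finset.sum_range fun i => d (i + 1) ^ 2]
    apply Finset.sum_congr rfl
    intro i _
    have hi : (i : ℕ) < n := i.isLt
    have h1 : d (i + 1) = x i.succ - x i.castSucc := by
      simp only [hd, hh, hf]
      congr 1
      · refine congrArg x.ofLp ?_
        exact Fin.ext (by simp [Nat.min_eq_left (by omega : (i:ℕ) + 1 ≤ n)])
      · exact congrArg x (Fin.ext (by simp [Nat.min_eq_left (by omega : (i:ℕ) ≤ n)]))
    rw [h1]
  have hDnonneg : 0 ≤ D := Finset.sum_nonneg fun i _ => sq_nonneg _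
  -- each coordinate squared is bounded
  have hcoord : ∀ j : Fin (n + 1), (x j) ^ 2 ≤ ((n : ℝ) + 1) * D := by
    intro j
    have hxj : x j = ∑ i ∈ Finset.range ((j : ℕ) + 1), d i := by
      rw [htel]
      simp [hf]
      refine congrArg x.ofLp ?_
      exact Fin.ext (by simp [Nat.min_eq_left (by omega : (j:ℕ) ≤ n)])
    rw [hxj]
    calc (∑ i ∈ Finset.range ((j : ℕ) + 1), d i) ^ 2
        ≤ (Finset.range ((j : ℕ) + 1)).card * ∑ i ∈ Finset.range ((j : ℕ) + 1), d i ^ 2 :=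
          sq_sum_le_card_mul_sum_sq
      _ ≤ ((n : ℝ) + 1) * D := by
          rw [hD]
          apply mul_le_mul
          · simp only [Finset.card_range]
            push_cast
            have : (j : ℕ) + 1 ≤ n + 1 := by omega
            exact_mod_cast this
          · exact Finset.sum_le_sum_of_subset_of_nonneg
              (Finset.range_subset_range.2 (by omega)) (fun i _ _ => sq_nonneg _)
          · exact Finset.sum_nonneg fun i _ => sq_nonneg _
          · positivity
  -- norm squared
  have hnorm : ‖x‖ ^ 2 = ∑ j : Fin (n + 1), (x j) ^ 2 := by
    rw [EuclideanSpace.norm_eq]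
    rw [Real.sq_sqrt (Finset.sum_nonneg fun i _ => sq_nonneg _)]
    simp [Real.norm_eq_abs, sq_abs]
  have hnormle : ‖x‖ ^ 2 ≤ ((n : ℝ) + 1) ^ 2 * D := by
    rw [hnorm]
    calc ∑ j : Fin (n + 1), (x j) ^ 2 ≤ ∑ _j : Fin (n + 1), ((n : ℝ) + 1) * D :=
          Finset.sum_le_sum fun j _ => hcoord j
      _ = ((n : ℝ) + 1) ^ 2 * D := by
          rw [Finset.sum_const]
          simp [Finset.card_univ]
          ring
  have hpos : (0 : ℝ) < ((n : ℝ) + 1) ^ 2 := by positivity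
  rw [ge_iff_le, div_mul_eq_mul_div, one_mul, div_le_iff₀ hpos]
  calc ‖x‖ ^ 2 ≤ ((n : ℝ) + 1) ^ 2 * D := hnormle
    _ ≤ ((n : ℝ) + 1) ^ 2 * (D + (x (Fin.last n)) ^ 2) := by nlinarith [sq_nonneg (x (Fin.last n))]
    _ = ((x 0) ^ 2 + (∑ i : Fin n, (x i.succ - x i.castSucc) ^ 2) + (x (Fin.last n)) ^ 2) * (((n:ℝ)+1)^2) := by
        rw [hDeq]; ring
end

section
/- For every integer n ≥ 1 and every vector y = (y₁,…,yₙ) ∈ ℝⁿ, we have 4y₁² + 2·Σ_{i=1}^{n−1} (y_i − y_{i+1})² + 4yₙ² ≥ (2/n²)·‖y‖₂². Consequently, the smallest eigenvalue of the symmetric tridiagonal matrix with diagonal (6,4,4,…,4,6) and off-diagonal entries −2 is at least 2/n². -/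
open Finset Matrix

lemma tridiag_aux_sq_le (n : ℕ) (y : Fin (n+1) → ℝ) (j : Fin (n+1)) :
    (y j)^2 ≤ ((n:ℝ)+1) * ((y 0)^2 + ∑ i : Fin n, (y i.castSucc - y i.succ)^2) := by
  set g : ℕ → ℝ := fun k => if h : k < n+1 then y ⟨k, h⟩ else 0 with hg
  set a : ℕ → ℝ := fun k => if k = 0 then y 0 else g k - g (k-1) with ha
  have hyj : y j = ∑ k ∈ Finset.range (j.val + 1), a k := by
    rw [Finset.sum_range_succ']
    have h1 : ∀ k ∈ Finset.range j.val, a (k+1) = g (k+1) - g k := by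
      intro k _; simp [ha]
    rw [Finset.sum_congr rfl h1, Finset.sum_range_sub g]
    have hgj : g j.val = y j := by simp [hg, j.isLt]; intro h; exact absurd h (by have := j.isLt; omega)
    have hg0 : g 0 = y 0 := by simp [hg]
    rw [hgj, hg0]
    simp [ha]
  have cs : (y j)^2 ≤ ((j.val + 1 : ℕ) : ℝ) * ∑ k ∈ Finset.range (j.val+1), (a k)^2 := by
    rw [hyj]
    have := sq_sum_le_card_mul_sum_sq (s := Finset.range (j.val+1)) (f := a)
    simpa using this
  have h2 : ∑ k ∈ Finset.range (j.val+1), (a k)^2 ≤ ∑ k ∈ Finset.range (n+1), (a k)^2 := by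
    apply Finset.sum_le_sum_of_subset_of_nonneg
    · exact Finset.range_subset_range.mpr (by omega)
    · intro k _ _; positivity
  have h3 : ∑ k ∈ Finset.range (n+1), (a k)^2
      = (y 0)^2 + ∑ i : Fin n, (y i.castSucc - y i.succ)^2 := by
    rw [Finset.sum_range_succ']
    have h4 : ∑ i : Fin n, (y i.castSucc - y i.succ)^2
        = ∑ k ∈ Finset.range n, (a (k+1))^2 := by
      rw [← Fin.sum_univ_eq_sum_range (fun k => (a (k+1))^2) n]
      apply Finset.sum_congr rfl
      intro i _
      have hc : g i.val = y i.castSucc := by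
        have : (i.val : ℕ) < n + 1 := by omega
        simp only [hg, dif_pos this]
        congr 1
      have hs : g (i.val+1) = y i.succ := by
        have : i.val + 1 < n + 1 := by omega
        simp only [hg, dif_pos this]
        congr 1
      simp only [ha, hc, hs]
      ring_nf
      simp [hc, hs]
      ring
    simp [h4, ha]
    ring
  calc (y j)^2 ≤ ((j.val + 1 : ℕ) : ℝ) * ∑ k ∈ Finset.range (j.val+1), (a k)^2 := cs
    _ ≤ ((n:ℝ)+1) * ∑ k ∈ Finset.range (n+1), (a k)^2 := by
        have hj1 : ((j.val + 1 : ℕ):ℝ) ≤ (n:ℝ)+1 := by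
          have h := Nat.succ_le_succ (Nat.lt_succ_iff.mp j.isLt)
          exact_mod_cast h
        apply mul_le_mul hj1 h2 (by positivity) (by positivity)
    _ = ((n:ℝ)+1) * ((y 0)^2 + ∑ i : Fin n, (y i.castSucc - y i.succ)^2) := by rw [h3]


lemma tridiag_quadform (n : ℕ) (hn : 0 < n) (A : Matrix (Fin (n + 1)) (Fin (n + 1)) ℝ)
    (hA : A = fun i j => if i = j then (if i = 0 ∨ i = Fin.last n then (6 : ℝ) else 4)
      else if (i : ℕ) + 1 = (j : ℕ) ∨ (j : ℕ) + 1 = (i : ℕ) then -2 else 0)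
    (x : Fin (n+1) → ℝ) :
    x ⬝ᵥ (A *ᵥ x) = 4*(x 0)^2 + 2*(∑ i : Fin n, (x i.castSucc - x i.succ)^2)
      + 4*(x (Fin.last n))^2 := by
  have h0last : (0 : Fin (n+1)) ≠ Fin.last n := by
    simp [Fin.ext_iff]; omega
  have hpt : ∀ i j : Fin (n+1), A i j * x j =
      (if i = j then (if i = 0 ∨ i = Fin.last n then (6:ℝ) else 4) * x j else 0)
      + (if (i:ℕ) + 1 = (j:ℕ) then (-2) * x j else 0)
      + (if (j:ℕ) + 1 = (i:ℕ) then (-2) * x j else 0) := by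
    intro i j
    simp only [hA]
    rcases eq_or_ne i j with h | h
    · subst h
      have c1 : ¬((i:ℕ)+1 = (i:ℕ)) := by omega
      simp [c1]
    · have hne : ¬ i = j := h
      simp only [hne, if_false, if_neg hne]
      by_cases h2 : (i:ℕ)+1 = (j:ℕ) <;> by_cases h3 : (j:ℕ)+1 = (i:ℕ)
      · omega
      · simp [h2, h3]
      · simp [h2, h3]
      · simp [h2, h3]
  have hQ : x ⬝ᵥ (A *ᵥ x) = ∑ i, x i * (∑ j : Fin (n+1), A i j * x j) := by
    simp [dotProduct, Matrix.mulVec]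
  rw [hQ]
  have hrow : ∀ i : Fin (n+1), (∑ j : Fin (n+1), A i j * x j) =
      (if i = 0 ∨ i = Fin.last n then (6:ℝ) else 4) * x i
      + (∑ j : Fin (n+1), if (i:ℕ) + 1 = (j:ℕ) then (-2) * x j else 0)
      + (∑ j : Fin (n+1), if (j:ℕ) + 1 = (i:ℕ) then (-2) * x j else 0) := by
    intro i
    rw [Finset.sum_congr rfl (fun j _ => hpt i j)]
    rw [Finset.sum_add_distrib, Finset.sum_add_distrib, Finset.sum_ite_eq]
    simp only [Finset.mem_univ, if_true]
  rw [Finset.sum_congr rfl (fun i _ => by rw [hrow i])]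
  have expand : ∀ i : Fin (n+1), x i * ((if i = 0 ∨ i = Fin.last n then (6:ℝ) else 4) * x i
      + (∑ j : Fin (n+1), if (i:ℕ) + 1 = (j:ℕ) then (-2) * x j else 0)
      + (∑ j : Fin (n+1), if (j:ℕ) + 1 = (i:ℕ) then (-2) * x j else 0))
      = (if i = 0 ∨ i = Fin.last n then (6:ℝ) else 4) * x i^2
      + x i * (∑ j : Fin (n+1), if (i:ℕ) + 1 = (j:ℕ) then (-2) * x j else 0)
      + x i * (∑ j : Fin (n+1), if (j:ℕ) + 1 = (i:ℕ) then (-2) * x j else 0) := by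
    intro i; ring
  rw [Finset.sum_congr rfl (fun i _ => expand i), Finset.sum_add_distrib,
    Finset.sum_add_distrib]
  -- T1
  have hT1 : ∑ i : Fin (n+1), (if i = 0 ∨ i = Fin.last n then (6:ℝ) else 4) * x i^2
      = 4 * (∑ i : Fin (n+1), x i^2) + 2 * x 0^2 + 2 * (x (Fin.last n))^2 := by
    have step : ∀ i : Fin (n+1), (if i = 0 ∨ i = Fin.last n then (6:ℝ) else 4) * x i^2
        = 4 * x i^2 + (if i = 0 then (2:ℝ)*x i^2 else 0) + (if i = Fin.last n then (2:ℝ)*x i^2 else 0) := by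
      intro i
      by_cases h1 : i = 0 <;> by_cases h2 : i = Fin.last n
      · exact absurd (h1 ▸ h2) h0last
      all_goals simp [h1, h2, hn.ne']
      all_goals ring
    rw [Finset.sum_congr rfl (fun i _ => step i), Finset.sum_add_distrib, Finset.sum_add_distrib,
      Finset.sum_ite_eq', Finset.sum_ite_eq', Finset.mul_sum]
    simp
  -- T2
  have hT2 : ∑ i : Fin (n+1), x i * (∑ j : Fin (n+1), if (i:ℕ) + 1 = (j:ℕ) then (-2:ℝ) * x j else 0)
      = ∑ k : Fin n, x k.castSucc * ((-2) * x k.succ) := by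
    rw [Fin.sum_univ_castSucc]
    have hlast : (∑ j : Fin (n+1), if ((Fin.last n : Fin (n+1)):ℕ) + 1 = (j:ℕ) then (-2:ℝ) * x j else 0) = 0 := by
      apply Finset.sum_eq_zero
      intro j _
      have hne : ¬(n + 1 = (j:ℕ)) := by have := j.isLt; omega
      simp only [Fin.val_last]
      rw [if_neg hne]
    rw [hlast, mul_zero, add_zero]
    apply Finset.sum_congr rfl
    intro k _
    congr 1
    have inner : (∑ j : Fin (n+1), if ((k.castSucc : Fin (n+1)):ℕ) + 1 = (j:ℕ) then (-2:ℝ) * x j else 0)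
        = ∑ j : Fin (n+1), if k.succ = j then (-2:ℝ) * x j else 0 := by
      apply Finset.sum_congr rfl
      intro j _
      congr 1
      simp [Fin.ext_iff]
    rw [inner, Finset.sum_ite_eq]
    simp
  -- T3
  have hT3 : ∑ i : Fin (n+1), x i * (∑ j : Fin (n+1), if (j:ℕ) + 1 = (i:ℕ) then (-2:ℝ) * x j else 0)
      = ∑ k : Fin n, x k.succ * ((-2) * x k.castSucc) := by
    rw [Fin.sum_univ_succ]
    have h0 : (∑ j : Fin (n+1), if (j:ℕ) + 1 = ((0 : Fin (n+1)):ℕ) then (-2:ℝ) * x j else 0) = 0 := by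
      apply Finset.sum_eq_zero
      intro j _
      have : ¬((j:ℕ) + 1 = ((0 : Fin (n+1)):ℕ)) := by simp
      simp [this]
    rw [h0, mul_zero, zero_add]
    apply Finset.sum_congr rfl
    intro k _
    congr 1
    have inner : (∑ j : Fin (n+1), if (j:ℕ) + 1 = ((k.succ : Fin (n+1)):ℕ) then (-2:ℝ) * x j else 0)
        = ∑ j : Fin (n+1), if k.castSucc = j then (-2:ℝ) * x j else 0 := by
      apply Finset.sum_congr rfl
      intro j _
      congr 1
      simp [Fin.ext_iff]
      omega
    rw [inner, Finset.sum_ite_eq]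
    simp
  rw [hT1, hT2, hT3]
  -- now pure algebra on sums
  have hsq : ∑ i : Fin n, (x i.castSucc - x i.succ)^2
      = (∑ i : Fin n, x i.castSucc^2) + (∑ i : Fin n, x i.succ^2)
        - 2 * ∑ i : Fin n, x i.castSucc * x i.succ := by
    rw [Finset.mul_sum, ← Finset.sum_add_distrib, ← Finset.sum_sub_distrib]
    apply Finset.sum_congr rfl
    intro i _; ring
  have hcast : ∑ i : Fin n, x i.castSucc^2 = (∑ i : Fin (n+1), x i^2) - x (Fin.last n)^2 := by
    rw [Fin.sum_univ_castSucc (f := fun i => x i^2)]; ring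
  have hsucc : ∑ i : Fin n, x i.succ^2 = (∑ i : Fin (n+1), x i^2) - x 0^2 := by
    rw [Fin.sum_univ_succ (f := fun i => x i^2)]; ring
  have h2 : ∑ k : Fin n, x k.castSucc * ((-2:ℝ) * x k.succ)
      = -2 * ∑ i : Fin n, x i.castSucc * x i.succ := by
    rw [Finset.mul_sum]; apply Finset.sum_congr rfl; intro i _; ring
  have h3 : ∑ k : Fin n, x k.succ * ((-2:ℝ) * x k.castSucc)
      = -2 * ∑ i : Fin n, x i.castSucc * x i.succ := by
    rw [Finset.mul_sum]; apply Finset.sum_congr rfl; intro i _; ring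
  rw [h2, h3, hsq, hcast, hsucc]
  ring


lemma tridiag_norm_sq (n : ℕ) (y : EuclideanSpace ℝ (Fin (n+1))) :
    ‖y‖^2 = ∑ j, (y j)^2 := by
  rw [EuclideanSpace.norm_eq, Real.sq_sqrt (by positivity)]
  simp [Real.norm_eq_abs, sq_abs]

lemma tridiag_key (n : ℕ) (y : Fin (n+1) → ℝ) :
    (2 / ((n : ℝ) + 1) ^ 2) * (∑ j, (y j)^2)
      ≤ 2 * (y 0)^2 + 2 * ∑ i : Fin n, (y i.castSucc - y i.succ)^2 := by
  set S : ℝ := (y 0)^2 + ∑ i : Fin n, (y i.castSucc - y i.succ)^2 with hS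
  have hsum : ∑ j, (y j)^2 ≤ ((n:ℝ)+1) * (((n:ℝ)+1) * S) := by
    calc ∑ j, (y j)^2 ≤ ∑ _j : Fin (n+1), ((n:ℝ)+1) * S :=
          Finset.sum_le_sum (fun j _ => tridiag_aux_sq_le n y j)
      _ = ((n:ℝ)+1) * (((n:ℝ)+1) * S) := by
          rw [Finset.sum_const]
          simp only [Finset.card_univ, Fintype.card_fin, nsmul_eq_mul]
          push_cast
          ring
  have hpos : (0:ℝ) < ((n:ℝ)+1)^2 := by positivity
  have h1 : (2 / ((n : ℝ) + 1) ^ 2) * (∑ j, (y j)^2)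
      ≤ (2 / ((n : ℝ) + 1) ^ 2) * (((n:ℝ)+1) * (((n:ℝ)+1) * S)) := by
    apply mul_le_mul_of_nonneg_left hsum (by positivity)
  have h2 : (2 / ((n : ℝ) + 1) ^ 2) * (((n:ℝ)+1) * (((n:ℝ)+1) * S)) = 2 * S := by
    field_simp
  rw [h2] at h1
  calc (2 / ((n : ℝ) + 1) ^ 2) * (∑ j, (y j)^2) ≤ 2 * S := h1
    _ = 2 * (y 0)^2 + 2 * ∑ i : Fin n, (y i.castSucc - y i.succ)^2 := by rw [hS]; ring

/-- For every `n ≥ 1` (encoded via `n+1` coordinates) and every `y ∈ ℝⁿ`,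
`4y₁² + 2·Σ_{i=1}^{n-1}(y_i - y_{i+1})² + 4yₙ² ≥ (2/n²)·‖y‖₂².  Consequently, every
eigenvalue of the symmetric tridiagonal matrix with diagonal `(6,4,…,4,6)` and
off-diagonal entries `-2` is at least `2/n²`. -/
theorem stmt1 (n : ℕ) (A : Matrix (Fin (n + 1)) (Fin (n + 1)) ℝ)
    (hA : A = fun i j => if i = j then (if i = 0 ∨ i = Fin.last n then (6 : ℝ) else 4)
      else if (i : ℕ) + 1 = (j : ℕ) ∨ (j : ℕ) + 1 = (i : ℕ) then -2 else 0)
    (hHerm : A.IsHermitian) :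
    (∀ y : EuclideanSpace ℝ (Fin (n + 1)),
      4 * (y 0) ^ 2 + 2 * (∑ i : Fin n, (y i.castSucc - y i.succ) ^ 2)
          + 4 * (y (Fin.last n)) ^ 2
        ≥ (2 / ((n : ℝ) + 1) ^ 2) * ‖y‖ ^ 2)
    ∧ (∀ i, 2 / ((n : ℝ) + 1) ^ 2 ≤ hHerm.eigenvalues i) := by
  have part1 : ∀ y : EuclideanSpace ℝ (Fin (n + 1)),
      4 * (y 0) ^ 2 + 2 * (∑ i : Fin n, (y i.castSucc - y i.succ) ^ 2)
          + 4 * (y (Fin.last n)) ^ 2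
        ≥ (2 / ((n : ℝ) + 1) ^ 2) * ‖y‖ ^ 2 := by
    intro y
    have h := tridiag_key n (fun j => y j)
    rw [tridiag_norm_sq n y]
    have h0 : (0:ℝ) ≤ (y 0)^2 := sq_nonneg _
    have hl : (0:ℝ) ≤ (y (Fin.last n))^2 := sq_nonneg _
    linarith
  refine ⟨part1, ?_⟩
  intro i
  set v := hHerm.eigenvectorBasis i with hv
  have hnorm : ‖v‖ = 1 := hHerm.eigenvectorBasis.orthonormal.1 i
  have heig : hHerm.eigenvalues i = (⇑v) ⬝ᵥ (A *ᵥ ⇑v) := by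
    have := hHerm.eigenvalues_eq i
    simpa using this
  have hquad : (2 / ((n : ℝ) + 1) ^ 2) ≤ (⇑v) ⬝ᵥ (A *ᵥ ⇑v) := by
    rcases Nat.eq_zero_or_pos n with hn | hn
    · subst hn
      have hval : (⇑v) ⬝ᵥ (A *ᵥ ⇑v) = 6 * (v 0)^2 := by
        simp [dotProduct, Matrix.mulVec, hA, Fin.sum_univ_one]
        ring
      have hv0 : (v 0)^2 = 1 := by
        have := tridiag_norm_sq 0 v
        rw [hnorm] at this
        simp [Fin.sum_univ_one] at this
        linarith [this]
      rw [hval, hv0]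
      norm_num
    · have hq := tridiag_quadform n hn A hA (⇑v)
      have hineq := part1 v
      have hns : ‖v‖ ^ 2 = 1 := by rw [hnorm]; norm_num
      rw [hns] at hineq
      rw [hq]
      linarith [hineq]
  rw [heig]
  exact hquad
end

section
/- The function Q has a unique global minimizer x* = (x₁*,…,xₙ*) ∈ ℝⁿ, and this minimizer satisfies 0 ≤ x₁* ≤ x₂* ≤ ⋯ ≤ xₙ* ≤ 1. -/
open intervalIntegral

/-- `F(x) = ∫₀ˣ ρ(z) dz`. -/
noncomputable def Fint (ρ : ℝ → ℝ) (t : ℝ) : ℝ := ∫ z in (0 : ℝ)..t, ρ z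

/-- The Lyapunov function
`Q(x₁,…,xₙ) = 2 F(x₁)² + Σ_{i=1}^{n-1} (F(x_{i+1}) - F(x_i))² + 2 (F(1) - F(xₙ))²`,
for `n+1` agents. -/
noncomputable def Qfun (ρ : ℝ → ℝ) (n : ℕ) (x : EuclideanSpace ℝ (Fin (n + 1))) : ℝ :=
  2 * (Fint ρ (x 0)) ^ 2
    + (∑ i : Fin n, (Fint ρ (x i.succ) - Fint ρ (x i.castSucc)) ^ 2)
    + 2 * (Fint ρ 1 - Fint ρ (x (Fin.last n))) ^ 2

/-- Telescoping sum over `Fin n`. -/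
lemma fin_telescope (n : ℕ) (f : Fin (n + 1) → ℝ) :
    ∑ i : Fin n, (f i.succ - f i.castSucc) = f (Fin.last n) - f 0 := by
  set F : ℕ → ℝ := fun k => f ⟨min k n, by omega⟩ with hF
  have h1 : ∀ i : Fin n, f i.succ - f i.castSucc = F ((i : ℕ) + 1) - F (i : ℕ) := by
    intro i
    have hi := i.isLt
    have e1 : F ((i : ℕ) + 1) = f i.succ := by
      simp only [hF]; congr 1; exact Fin.ext (by simp [Nat.min_eq_left (by omega : (i:ℕ)+1 ≤ n)])
    have e2 : F (i : ℕ) = f i.castSucc := by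
      simp only [hF]; congr 1; exact Fin.ext (by simp [Nat.min_eq_left (by omega : (i:ℕ) ≤ n)])
    rw [e1, e2]
  calc ∑ i : Fin n, (f i.succ - f i.castSucc)
      = ∑ i : Fin n, (F ((i : ℕ) + 1) - F (i : ℕ)) := Finset.sum_congr rfl fun i _ => h1 i
    _ = ∑ i ∈ Finset.range n, (F (i + 1) - F i) :=
        Fin.sum_univ_eq_sum_range (fun k => F (k + 1) - F k) n
    _ = F n - F 0 := Finset.sum_range_sub F n
    _ = f (Fin.last n) - f 0 := by
        congr 1 <;> · simp only [hF]; congr 1; exact Fin.ext (by simp)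

/-- Key algebraic identity: `Q` decomposes as min value plus a nonnegative remainder. -/
lemma key_identity (n : ℕ) (L : ℝ) (u : Fin (n + 1) → ℝ)
    (s : Fin (n + 1) → ℝ) (hs : ∀ j, s j = L * (2 * (j : ℕ) + 1) / (2 * (n + 1))) :
    2 * (u 0) ^ 2 + (∑ i : Fin n, (u i.succ - u i.castSucc) ^ 2)
      + 2 * (L - u (Fin.last n)) ^ 2
    = L ^ 2 / (n + 1)
      + (2 * (u 0 - s 0) ^ 2
        + (∑ i : Fin n, ((u i.succ - s i.succ) - (u i.castSucc - s i.castSucc)) ^ 2)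
        + 2 * (u (Fin.last n) - s (Fin.last n)) ^ 2) := by
  have hn1 : (0 : ℝ) < (n : ℝ) + 1 := by positivity
  set lam : ℝ := L / (n + 1) with hlam
  set v : Fin (n + 1) → ℝ := fun j => u j - s j with hv
  have hsd : ∀ i : Fin n, s i.succ - s i.castSucc = lam := by
    intro i
    rw [hs, hs, hlam]
    simp only [Fin.val_succ, Fin.coe_castSucc]
    push_cast
    field_simp
    ring
  have hterm : ∀ i : Fin n, (u i.succ - u i.castSucc) ^ 2
      = (v i.succ - v i.castSucc) ^ 2 + 2 * lam * (v i.succ - v i.castSucc) + lam ^ 2 := by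
    intro i
    have h1 : u i.succ - u i.castSucc = (v i.succ - v i.castSucc) + lam := by
      rw [hv]; simp only; have := hsd i; nlinarith [hsd i]
    rw [h1]; ring
  have hsum : ∑ i : Fin n, (u i.succ - u i.castSucc) ^ 2
      = (∑ i : Fin n, (v i.succ - v i.castSucc) ^ 2)
        + 2 * lam * (v (Fin.last n) - v 0) + n * lam ^ 2 := by
    rw [Finset.sum_congr rfl fun i _ => hterm i]
    rw [Finset.sum_add_distrib, Finset.sum_add_distrib, ← Finset.mul_sum,
      fin_telescope n v, Finset.sum_const]
    simp [Finset.card_univ, nsmul_eq_mul]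
  have hs0 : s 0 = lam / 2 := by
    rw [hs, hlam, div_div]
    simp only [Fin.val_zero, Nat.cast_zero, mul_zero, zero_add, mul_one]
    ring_nf
  have hslast : L - s (Fin.last n) = lam / 2 := by
    rw [hs, hlam]; simp only [Fin.val_last]; push_cast; field_simp; ring
  have hu0 : u 0 = v 0 + lam / 2 := by rw [hv]; simp [hs0]
  have hulast : L - u (Fin.last n) = lam / 2 - v (Fin.last n) := by
    rw [hv]; simp only; linarith [hslast]
  have hL : L ^ 2 / (n + 1) = (n + 1) * lam ^ 2 := by
    rw [hlam]; field_simp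
  calc 2 * (u 0) ^ 2 + (∑ i : Fin n, (u i.succ - u i.castSucc) ^ 2)
        + 2 * (L - u (Fin.last n)) ^ 2
      = 2 * (v 0 + lam / 2) ^ 2
        + ((∑ i : Fin n, (v i.succ - v i.castSucc) ^ 2)
          + 2 * lam * (v (Fin.last n) - v 0) + n * lam ^ 2)
        + 2 * (lam / 2 - v (Fin.last n)) ^ 2 := by rw [hu0, hsum, hulast]
    _ = (n + 1) * lam ^ 2
        + (2 * (v 0) ^ 2 + (∑ i : Fin n, (v i.succ - v i.castSucc) ^ 2)
          + 2 * (v (Fin.last n)) ^ 2) := by ring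
    _ = _ := by rw [hL]

/-- `Q` has a unique global minimizer `x*`, and this minimizer satisfies
`0 ≤ x₁* ≤ x₂* ≤ ⋯ ≤ xₙ* ≤ 1`. -/
theorem stmt2 (n : ℕ) (ρ : ℝ → ℝ) (ρmax : ℝ) (hρmax : 1 ≤ ρmax)
    (hρdiff : Differentiable ℝ ρ) (hρ : ∀ z, 1 ≤ ρ z ∧ ρ z ≤ ρmax) :
    ∃ xs : EuclideanSpace ℝ (Fin (n + 1)),
      (∀ y, Qfun ρ n xs ≤ Qfun ρ n y)
      ∧ (∀ y, (∀ w, Qfun ρ n y ≤ Qfun ρ n w) → y = xs)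
      ∧ (∀ i j : Fin (n + 1), i ≤ j → xs i ≤ xs j)
      ∧ 0 ≤ xs 0 ∧ xs (Fin.last n) ≤ 1 := by
  have hρc : Continuous ρ := hρdiff.continuous
  have hint : ∀ a b : ℝ, IntervalIntegrable ρ MeasureTheory.volume a b :=
    fun a b => hρc.intervalIntegrable a b
  -- F is continuous
  have hFc : Continuous (Fint ρ) := intervalIntegral.continuous_primitive hint 0
  -- F difference
  have hFd : ∀ a b : ℝ, Fint ρ b - Fint ρ a = ∫ z in a..b, ρ z := by
    intro a b
    have := intervalIntegral.integral_add_adjacent_intervals (hint 0 a) (hint a b)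
    unfold Fint
    linarith
  -- F strictly monotone
  have hFmono : StrictMono (Fint ρ) := by
    intro a b hab
    have h1 : (∫ z in a..b, (1 : ℝ)) ≤ ∫ z in a..b, ρ z :=
      intervalIntegral.integral_mono_on hab.le intervalIntegrable_const (hint a b)
        (fun x _ => (hρ x).1)
    rw [intervalIntegral.integral_const, smul_eq_mul, mul_one] at h1
    have := hFd a b
    linarith
  have hF0 : Fint ρ 0 = 0 := intervalIntegral.integral_same
  set L : ℝ := Fint ρ 1 with hLdef
  have hL1 : 1 ≤ L := by
    have := hFd 0 1
    have h1 : (∫ z in (0:ℝ)..1, (1 : ℝ)) ≤ ∫ z in (0:ℝ)..1, ρ z :=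
      intervalIntegral.integral_mono_on zero_le_one intervalIntegrable_const (hint 0 1)
        (fun x _ => (hρ x).1)
    rw [intervalIntegral.integral_const, smul_eq_mul, mul_one] at h1
    linarith
  have hLpos : 0 < L := lt_of_lt_of_le one_pos hL1
  have hn1 : (0 : ℝ) < (n : ℝ) + 1 := by positivity
  -- target values
  set s : Fin (n + 1) → ℝ := fun j => L * (2 * (j : ℕ) + 1) / (2 * (n + 1)) with hsdef
  have hs_def : ∀ j, s j = L * (2 * (j : ℕ) + 1) / (2 * (n + 1)) := fun j => rfl
  have hs_mem : ∀ j : Fin (n + 1), s j ∈ Set.Icc (Fint ρ 0) (Fint ρ 1) := by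
    intro j
    rw [hF0, ← hLdef]
    constructor
    · apply div_nonneg (by positivity) (by positivity)
    · rw [div_le_iff₀ (by positivity)]
      have hj : ((j : ℕ) : ℝ) ≤ (n : ℝ) := by exact_mod_cast Nat.lt_succ_iff.mp j.isLt
      nlinarith
  -- existence of preimages by IVT
  have hexists : ∀ j : Fin (n + 1), ∃ x ∈ Set.Icc (0 : ℝ) 1, Fint ρ x = s j := by
    intro j
    have := intermediate_value_Icc (zero_le_one) (hFc.continuousOn (s := Set.Icc 0 1))
    exact this (hs_mem j)
  classical
  set xs : EuclideanSpace ℝ (Fin (n + 1)) :=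
    WithLp.toLp 2 (fun j => Classical.choose (hexists j)) with hxsdef
  have hxs : ∀ j, xs j ∈ Set.Icc (0 : ℝ) 1 ∧ Fint ρ (xs j) = s j := by
    intro j
    exact ⟨(Classical.choose_spec (hexists j)).1, (Classical.choose_spec (hexists j)).2⟩
  -- Q of any point y
  have hQ : ∀ y : EuclideanSpace ℝ (Fin (n + 1)),
      Qfun ρ n y = L ^ 2 / (n + 1)
        + (2 * (Fint ρ (y 0) - s 0) ^ 2
          + (∑ i : Fin n, ((Fint ρ (y i.succ) - s i.succ)
              - (Fint ρ (y i.castSucc) - s i.castSucc)) ^ 2)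
          + 2 * (Fint ρ (y (Fin.last n)) - s (Fin.last n)) ^ 2) := by
    intro y
    exact key_identity n L (fun j => Fint ρ (y j)) s hs_def
  have hR_nonneg : ∀ y : EuclideanSpace ℝ (Fin (n + 1)),
      L ^ 2 / (n + 1) ≤ Qfun ρ n y := by
    intro y
    rw [hQ y]
    have h1 : (0:ℝ) ≤ 2 * (Fint ρ (y 0) - s 0) ^ 2 := by positivity
    have h2 : (0:ℝ) ≤ ∑ i : Fin n, ((Fint ρ (y i.succ) - s i.succ)
        - (Fint ρ (y i.castSucc) - s i.castSucc)) ^ 2 :=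
      Finset.sum_nonneg fun i _ => sq_nonneg _
    have h3 : (0:ℝ) ≤ 2 * (Fint ρ (y (Fin.last n)) - s (Fin.last n)) ^ 2 := by positivity
    linarith
  have hQxs : Qfun ρ n xs = L ^ 2 / (n + 1) := by
    rw [hQ xs]
    have hz : ∀ j, Fint ρ (xs j) - s j = 0 := fun j => by rw [(hxs j).2]; ring
    simp [hz]
  refine ⟨xs, ?_, ?_, ?_, ?_, ?_⟩
  · intro y; rw [hQxs]; exact hR_nonneg y
  · -- uniqueness
    intro y hy
    have hle : Qfun ρ n y ≤ L ^ 2 / (n + 1) := hQxs ▸ hy xs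
    have heq : Qfun ρ n y = L ^ 2 / (n + 1) := le_antisymm hle (hR_nonneg y)
    -- so the remainder is zero
    have h1 : (0:ℝ) ≤ 2 * (Fint ρ (y 0) - s 0) ^ 2 := by positivity
    have h2 : (0:ℝ) ≤ ∑ i : Fin n, ((Fint ρ (y i.succ) - s i.succ)
        - (Fint ρ (y i.castSucc) - s i.castSucc)) ^ 2 :=
      Finset.sum_nonneg fun i _ => sq_nonneg _
    have h3 : (0:ℝ) ≤ 2 * (Fint ρ (y (Fin.last n)) - s (Fin.last n)) ^ 2 := by positivity
    have hQy := hQ y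
    have hzero0 : Fint ρ (y 0) - s 0 = 0 := by
      have : 2 * (Fint ρ (y 0) - s 0) ^ 2 = 0 := by linarith
      nlinarith [sq_nonneg (Fint ρ (y 0) - s 0)]
    have hzeroS : ∀ i : Fin n,
        (Fint ρ (y i.succ) - s i.succ) - (Fint ρ (y i.castSucc) - s i.castSucc) = 0 := by
      have hsumz : (∑ i : Fin n, ((Fint ρ (y i.succ) - s i.succ)
          - (Fint ρ (y i.castSucc) - s i.castSucc)) ^ 2) = 0 := by linarith
      intro i
      have := (Finset.sum_eq_zero_iff_of_nonneg
        (fun i _ => sq_nonneg _)).mp hsumz i (Finset.mem_univ i)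
      exact pow_eq_zero_iff (by norm_num) |>.mp this
    have hall : ∀ j : Fin (n + 1), Fint ρ (y j) = s j := by
      intro j
      induction j using Fin.induction with
      | zero => linarith [hzero0]
      | succ i ih =>
        have := hzeroS i
        have hc : Fint ρ (y i.castSucc) = s i.castSucc := ih
        have : Fint ρ (y i.succ) - s i.succ = 0 := by
          rw [hc] at this; linarith
        linarith
    have : ∀ j, y j = xs j := by
      intro j
      apply hFmono.injective
      rw [hall j, (hxs j).2]
    ext j
    exact this j
  · -- monotone
    intro i j hij
    rcases eq_or_lt_of_le hij with h | h
    · rw [h]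
    · have hsij : s i < s j := by
        rw [hs_def, hs_def]
        have hij' : ((i : ℕ) : ℝ) < ((j : ℕ) : ℝ) := by exact_mod_cast h
        rw [div_lt_div_iff₀ (by positivity) (by positivity)]
        have hm := mul_lt_mul_of_pos_left hij' (show (0:ℝ) < 4*L*((n:ℝ)+1) by positivity)
        nlinarith [hm]
      have : Fint ρ (xs i) < Fint ρ (xs j) := by rw [(hxs i).2, (hxs j).2]; exact hsij
      exact (hFmono.lt_iff_lt.mp this).le
  · exact (hxs 0).1.1
  · exact (hxs (Fin.last n)).1.2
end

section
/- Let x* be the unique global minimizer of Q. Then for every i = 1,…,n, F(x_i*) = ((2i − 1)/(2n))·F(1). In particular, in the ρ-weighted metric the minimizer places the agents at the points whose F-values divide [0, F(1)] into gaps of sizes F(1)/(2n), 2F(1)/(2n), …, 2F(1)/(2n), F(1)/(2n). -/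
open intervalIntegral

lemma Fint_surj (ρ : ℝ → ℝ) (hc : Continuous ρ) (h1 : ∀ z, 1 ≤ ρ z) :
    Function.Surjective (Fint ρ) := by
  have hint : ∀ a b : ℝ, IntervalIntegrable ρ MeasureTheory.volume a b :=
    fun a b => hc.intervalIntegrable a b
  have hF : Continuous (Fint ρ) := intervalIntegral.continuous_primitive hint 0
  have hge : ∀ t : ℝ, 0 ≤ t → t ≤ Fint ρ t := by
    intro t ht
    have : ∫ z in (0:ℝ)..t, (1:ℝ) ≤ ∫ z in (0:ℝ)..t, ρ z := by
      apply intervalIntegral.integral_mono_on ht (intervalIntegrable_const) (hint 0 t)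
      intro z _; exact h1 z
    simpa [Fint] using this
  have hle : ∀ t : ℝ, t ≤ 0 → Fint ρ t ≤ t := by
    intro t ht
    have h2 : ∫ z in t..(0:ℝ), (1:ℝ) ≤ ∫ z in t..(0:ℝ), ρ z := by
      apply intervalIntegral.integral_mono_on ht (intervalIntegrable_const) (hint t 0)
      intro z _; exact h1 z
    have h3 : Fint ρ t = - ∫ z in t..(0:ℝ), ρ z := by
      rw [Fint, intervalIntegral.integral_symm]
    rw [h3]
    simp only [integral_one] at h2
    linarith
  intro u
  set M : ℝ := |u| with hM
  have hM0 : 0 ≤ M := abs_nonneg u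
  have h1' : Fint ρ (-M) ≤ u := le_trans (hle (-M) (by linarith)) (by simpa using neg_abs_le u)
  have h2' : u ≤ Fint ρ M := le_trans (le_abs_self u) (hge M hM0)
  have := intermediate_value_Icc (by linarith : -M ≤ M) hF.continuousOn
  obtain ⟨t, _, ht⟩ := this ⟨h1', h2'⟩
  exact ⟨t, ht⟩

lemma tel (m : ℕ) (w : Fin (m+1) → ℝ) :
    ∑ i : Fin m, (w i.succ - w i.castSucc) = w (Fin.last m) - w 0 := by
  set W : ℕ → ℝ := fun j => if h : j < m+1 then w ⟨j, h⟩ else 0 with hW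
  have h1 : ∀ i : Fin m, w i.succ - w i.castSucc = W (↑i + 1) - W ↑i := by
    intro i
    have hi := i.isLt
    simp only [hW]
    rw [dif_pos (by omega), dif_pos (by omega)]
    rfl
  have h2 : ∑ i : Fin m, (w i.succ - w i.castSucc)
      = ∑ i ∈ Finset.range m, (W (i + 1) - W i) := by
    rw [← Fin.sum_univ_eq_sum_range (fun j => W (j+1) - W j) m]
    exact Finset.sum_congr rfl (fun i _ => h1 i)
  rw [h2, Finset.sum_range_sub W]
  have hWm : W m = w (Fin.last m) := by simp only [hW]; rw [dif_pos (by omega)]; rfl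
  have hW0 : W 0 = w 0 := by simp only [hW]; rw [dif_pos (by omega)]; rfl
  rw [hWm, hW0]

noncomputable def gfun (L : ℝ) (n : ℕ) (u : Fin (n+1) → ℝ) : ℝ :=
  2 * (u 0) ^ 2 + (∑ i : Fin n, (u i.succ - u i.castSucc) ^ 2) + 2 * (L - u (Fin.last n)) ^ 2

lemma gfun_identity (L : ℝ) (n : ℕ) (c : ℝ) (hc : L = 2*((n:ℝ)+1)*c) (w : Fin (n+1) → ℝ) :
    gfun L n (fun i => (2*(i:ℝ)+1)*c + w i)
      = gfun L n (fun i => (2*(i:ℝ)+1)*c)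
        + (2*(w 0)^2 + (∑ i : Fin n, (w i.succ - w i.castSucc)^2) + 2*(w (Fin.last n))^2) := by
  unfold gfun
  have h0 : (((0 : Fin (n+1)) : ℕ) : ℝ) = 0 := by simp
  have hlast : (((Fin.last n : Fin (n+1)) : ℕ) : ℝ) = n := by simp
  have e1 : ∀ i : Fin n,
      ((2*((i.succ : Fin (n+1)) : ℝ)+1)*c + w i.succ
        - ((2*((i.castSucc : Fin (n+1)) : ℝ)+1)*c + w i.castSucc)) ^ 2
      = 4*c^2 + 4*c*(w i.succ - w i.castSucc) + (w i.succ - w i.castSucc)^2 := by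
    intro i
    have hs : ((i.succ : Fin (n+1)) : ℝ) = (i : ℝ) + 1 := by
      simp [Fin.val_succ]
    have hcs : ((i.castSucc : Fin (n+1)) : ℝ) = (i : ℝ) := by
      simp
    rw [hs, hcs]; ring
  have e2 : ∀ i : Fin n,
      ((2*((i.succ : Fin (n+1)) : ℝ)+1)*c - ((2*((i.castSucc : Fin (n+1)) : ℝ)+1)*c)) ^ 2
      = 4*c^2 := by
    intro i
    have hs : ((i.succ : Fin (n+1)) : ℝ) = (i : ℝ) + 1 := by simp [Fin.val_succ]
    have hcs : ((i.castSucc : Fin (n+1)) : ℝ) = (i : ℝ) := by simp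
    rw [hs, hcs]; ring
  have hS1 : ∑ i : Fin n, ((2*((i.succ : Fin (n+1)) : ℝ)+1)*c + w i.succ
        - ((2*((i.castSucc : Fin (n+1)) : ℝ)+1)*c + w i.castSucc)) ^ 2
      = (n : ℝ) * (4*c^2) + 4*c*(w (Fin.last n) - w 0)
        + ∑ i : Fin n, (w i.succ - w i.castSucc)^2 := by
    rw [Finset.sum_congr rfl (fun i _ => e1 i), Finset.sum_add_distrib,
      Finset.sum_add_distrib, Finset.sum_const, ← Finset.mul_sum, tel]
    simp [Finset.card_univ, mul_comm]
  have hS2 : ∑ i : Fin n, ((2*((i.succ : Fin (n+1)) : ℝ)+1)*c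
        - ((2*((i.castSucc : Fin (n+1)) : ℝ)+1)*c)) ^ 2 = (n : ℝ) * (4*c^2) := by
    rw [Finset.sum_congr rfl (fun i _ => e2 i), Finset.sum_const]
    simp [Finset.card_univ, mul_comm]
  rw [hS1, hS2]
  simp only [h0, hlast]
  rw [hc]
  ring

/-- For the unique global minimizer `x*` of `Q`, and every
`i = 1,…,n` (zero-indexed here), `F(x_i*) = ((2i - 1)/(2n))·F(1)`, i.e. with
zero-based index `i`, `F(x*_i) = ((2i + 1)/(2n))·F(1)` where there are `n = n+1` agents. -/
theorem stmt4 (n : ℕ) (ρ : ℝ → ℝ) (ρmax : ℝ) (hρmax : 1 ≤ ρmax)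
    (hρdiff : Differentiable ℝ ρ) (hρ : ∀ z, 1 ≤ ρ z ∧ ρ z ≤ ρmax)
    (xs : EuclideanSpace ℝ (Fin (n + 1)))
    (hmin : ∀ y, Qfun ρ n xs ≤ Qfun ρ n y) :
    ∀ i : Fin (n + 1),
      Fint ρ (xs i) = ((2 * (i : ℝ) + 1) / (2 * ((n : ℝ) + 1))) * Fint ρ 1 := by
  have hsurj : Function.Surjective (Fint ρ) :=
    Fint_surj ρ hρdiff.continuous (fun z => (hρ z).1)
  set L : ℝ := Fint ρ 1 with hL
  have hn1 : ((n : ℝ) + 1) ≠ 0 := by positivity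
  set c : ℝ := L / (2 * ((n : ℝ) + 1)) with hcdef
  have hcL : L = 2 * ((n : ℝ) + 1) * c := by
    rw [hcdef]; field_simp
  set v : Fin (n+1) → ℝ := fun i => Fint ρ (xs i) with hv
  have hQxs : Qfun ρ n xs = gfun L n v := rfl
  have hming : ∀ u : Fin (n+1) → ℝ, gfun L n v ≤ gfun L n u := by
    intro u
    choose y hy using fun i => hsurj (u i)
    have h1 := hmin ((WithLp.equiv 2 (Fin (n+1) → ℝ)).symm y)
    have h2 : Qfun ρ n ((WithLp.equiv 2 (Fin (n+1) → ℝ)).symm y) = gfun L n u := by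
      have : (fun i => Fint ρ (((WithLp.equiv 2 (Fin (n+1) → ℝ)).symm y) i)) = u := by
        funext i
        simpa using hy i
      calc Qfun ρ n ((WithLp.equiv 2 (Fin (n+1) → ℝ)).symm y)
          = gfun L n (fun i => Fint ρ (((WithLp.equiv 2 (Fin (n+1) → ℝ)).symm y) i)) := rfl
        _ = gfun L n u := by rw [this]
    rw [← hQxs, ← h2]
    exact h1
  set w : Fin (n+1) → ℝ := fun i : Fin (n+1) => v i - (2*((i:ℕ):ℝ)+1)*c with hwdef
  have hvw : v = fun i : Fin (n+1) => (2*((i:ℕ):ℝ)+1)*c + w i := by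
    funext i; simp [hwdef]
  have hkey : gfun L n v = gfun L n (fun i : Fin (n+1) => (2*((i:ℕ):ℝ)+1)*c)
      + (2*(w 0)^2 + (∑ i : Fin n, (w i.succ - w i.castSucc)^2) + 2*(w (Fin.last n))^2) := by
    conv_lhs => rw [hvw]
    exact gfun_identity L n c hcL w
  have hq : 2*(w 0)^2 + (∑ i : Fin n, (w i.succ - w i.castSucc)^2) + 2*(w (Fin.last n))^2 ≤ 0 := by
    have := hming (fun i : Fin (n+1) => (2*((i:ℕ):ℝ)+1)*c)
    rw [hkey] at this
    linarith
  have hsum_nonneg : 0 ≤ ∑ i : Fin n, (w i.succ - w i.castSucc)^2 :=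
    Finset.sum_nonneg (fun i _ => sq_nonneg _)
  have hw0 : w 0 = 0 := by
    have h1 : (w 0)^2 ≤ 0 := by nlinarith [sq_nonneg (w (Fin.last n))]
    nlinarith [sq_nonneg (w 0)]
  have hsum0 : ∑ i : Fin n, (w i.succ - w i.castSucc)^2 = 0 := by
    nlinarith [sq_nonneg (w 0), sq_nonneg (w (Fin.last n))]
  have hdiff : ∀ i : Fin n, w i.succ = w i.castSucc := by
    intro i
    have := (Finset.sum_eq_zero_iff_of_nonneg (fun i _ => sq_nonneg _)).1 hsum0 i
      (Finset.mem_univ i)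
    have h2 : w i.succ - w i.castSucc = 0 := by
      exact pow_eq_zero_iff (n := 2) (by norm_num) |>.1 this
    linarith
  have hwall : ∀ i : Fin (n+1), w i = 0 := by
    intro i
    induction i using Fin.induction with
    | zero => exact hw0
    | succ j ih => rw [hdiff j]; exact ih
  intro i
  have hvi : v i = (2*((i:ℕ):ℝ)+1)*c := by
    have := hwall i
    simp only [hwdef] at this
    linarith
  have : Fint ρ (xs i) = (2*((i:ℕ):ℝ)+1)*c := hvi
  rw [this, hcdef]
  field_simp
end

section
/- Let x* be the unique global minimizer of Q. Then x* minimizes the coverage metric Φ: for every z = (z₁,…,zₙ) ∈ [0,1]ⁿ one has Φ(x*) ≤ Φ(z). Moreover, x* is the unique minimizer of Φ among vectors with nondecreasing entries in [0,1]: if z ∈ [0,1]ⁿ satisfies z₁ ≤ z₂ ≤ ⋯ ≤ zₙ and z ≠ x*, then Φ(z) > Φ(x*). -/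
open intervalIntegral

/-- The ρ-weighted distance `d_ρ(a,b) = ∫_{min(a,b)}^{max(a,b)} ρ(z) dz`. -/
noncomputable def dρ (ρ : ℝ → ℝ) (a b : ℝ) : ℝ := ∫ z in (min a b)..(max a b), ρ z

/-- The coverage metric `Φ(x) = sup_{y ∈ [0,1]} min_{1 ≤ i ≤ n} d_ρ(y, x_i)`. -/
noncomputable def Φ (ρ : ℝ → ℝ) (n : ℕ) (x : EuclideanSpace ℝ (Fin (n + 1))) : ℝ :=
  ⨆ y : Set.Icc (0 : ℝ) 1, ⨅ i : Fin (n + 1), dρ ρ (y : ℝ) (x i)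

section basic
variable {ρ : ℝ → ℝ} (hcont : Continuous ρ) (h1 : ∀ z, 1 ≤ ρ z)
include hcont

lemma Fint_sub (a b : ℝ) : Fint ρ b - Fint ρ a = ∫ z in a..b, ρ z := by
  have h := integral_add_adjacent_intervals (μ := MeasureTheory.volume)
    (f := ρ) (a := (0:ℝ)) (b := a) (c := b)
    (hcont.intervalIntegrable _ _) (hcont.intervalIntegrable _ _)
  unfold Fint
  linarith [h]

include h1 in
lemma Fint_gap {a b : ℝ} (hab : a ≤ b) : b - a ≤ Fint ρ b - Fint ρ a := by
  rw [Fint_sub hcont]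
  have : (b - a) = ∫ _ in a..b, (1:ℝ) := by simp
  rw [this]
  exact intervalIntegral.integral_mono_on hab (intervalIntegrable_const)
    (hcont.intervalIntegrable _ _) (fun x _ => h1 x)

include h1 in
lemma Fint_strictMono : StrictMono (Fint ρ) := by
  intro a b hab
  have := Fint_gap hcont h1 hab.le
  linarith

omit hcont in
lemma Fint_zero : Fint ρ 0 = 0 := integral_same

lemma Fint_cont : Continuous (Fint ρ) := by
  have h : ∀ t : ℝ, HasDerivAt (Fint ρ) (ρ t) t := fun t =>
    (hcont.integral_hasStrictDerivAt 0 t).hasDerivAt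
  exact continuous_iff_continuousAt.2 fun t => (h t).continuousAt

include h1 in
lemma dρ_eq (a b : ℝ) : dρ ρ a b = |Fint ρ b - Fint ρ a| := by
  rcases le_total a b with h | h
  · rw [dρ, min_eq_left h, max_eq_right h, ← Fint_sub hcont,
      abs_of_nonneg (by linarith [Fint_gap hcont h1 h])]
  · rw [dρ, min_eq_right h, max_eq_left h, ← Fint_sub hcont,
      abs_of_nonpos (by linarith [Fint_gap hcont h1 h]), neg_sub]

include h1 in
lemma Fint_surj_s5 {v : ℝ} (h0 : 0 ≤ v) (hv : v ≤ Fint ρ 1) :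
    ∃ y ∈ Set.Icc (0:ℝ) 1, Fint ρ y = v := by
  have := intermediate_value_Icc (by norm_num : (0:ℝ) ≤ 1) (Fint_cont hcont).continuousOn
  have hmem : v ∈ Set.Icc (Fint ρ 0) (Fint ρ 1) := by
    rw [Fint_zero]; exact ⟨h0, hv⟩
  obtain ⟨y, hy, hyv⟩ := this hmem
  exact ⟨y, hy, hyv⟩

end basic

lemma telescope (n : ℕ) (g : Fin (n+1) → ℝ) :
    ∑ i : Fin n, (g i.succ - g i.castSucc) = g (Fin.last n) - g 0 := by
  induction n with
  | zero => simp
  | succ n ih =>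
    rw [Fin.sum_univ_castSucc]
    have h2 : ∑ i : Fin n, (g (i.castSucc).succ - g (i.castSucc).castSucc)
        = ∑ i : Fin n, ((g ∘ Fin.castSucc) i.succ - (g ∘ Fin.castSucc) i.castSucc) := by
      refine Finset.sum_congr rfl fun i _ => ?_
      simp only [Function.comp, Fin.succ_castSucc]
    rw [h2, ih (g ∘ Fin.castSucc)]
    have h3 : (Fin.last n).succ = Fin.last (n+1) := rfl
    have h4 : (g ∘ Fin.castSucc) (Fin.last n) = g ((Fin.last n).castSucc) := rfl
    have h5 : (g ∘ Fin.castSucc) 0 = g 0 := by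
      simp [Function.comp]
    rw [h3, h4, h5]
    ring

/-- Key quadratic identity. -/
lemma qkey (n : ℕ) (c : ℝ) (b : Fin (n+1) → ℝ) :
    2*(b 0)^2 + (∑ i : Fin n, (b i.succ - b i.castSucc)^2) + 2*(c - b (Fin.last n))^2
    = c^2/(n+1) + 2*(b 0 - c/(2*(n+1)))^2
      + (∑ i : Fin n, (b i.succ - b i.castSucc - c/(n+1))^2)
      + 2*(b (Fin.last n) - c + c/(2*(n+1)))^2 := by
  set m := c/((n:ℝ)+1) with hm
  have hn1 : ((n:ℝ)+1) ≠ 0 := by positivity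
  have hsum : ∑ i : Fin n, (b i.succ - b i.castSucc)^2
      = (∑ i : Fin n, (b i.succ - b i.castSucc - m)^2)
        + 2*m*(b (Fin.last n) - b 0) - n*m^2 := by
    have : ∀ i : Fin n, (b i.succ - b i.castSucc)^2
        = (b i.succ - b i.castSucc - m)^2 + (2*m*(b i.succ - b i.castSucc) - m^2) := by
      intro i; ring
    rw [Finset.sum_congr rfl fun i _ => this i, Finset.sum_add_distrib,
      Finset.sum_sub_distrib, ← Finset.mul_sum, telescope n b]
    simp [Finset.sum_const, Finset.card_univ]
    ring
  rw [hsum]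
  have hmc : ((n:ℝ)+1)*m = c := by rw [hm, mul_div_cancel₀ _ hn1]
  have h2 : c/(2*((n:ℝ)+1)) = m/2 := by
    rw [hm, div_div]
    congr 1
    ring
  have hc2 : c^2/((n:ℝ)+1) = ((n:ℝ)+1)*m^2 := by
    rw [← hmc]; field_simp
  rw [h2, hc2, ← hmc]
  ring

/-- The optimal F-values. -/
noncomputable def astar (n : ℕ) (c : ℝ) (i : Fin (n+1)) : ℝ :=
  (2*(i:ℕ)+1)*c/(2*((n:ℝ)+1))

lemma qmin_char (n : ℕ) (c : ℝ) (b : Fin (n+1) → ℝ)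
    (h : 2*(b 0)^2 + (∑ i : Fin n, (b i.succ - b i.castSucc)^2)
        + 2*(c - b (Fin.last n))^2 ≤ c^2/(n+1)) :
    ∀ i, b i = astar n c i := by
  rw [qkey] at h
  have hS : (0:ℝ) ≤ ∑ i : Fin n, (b i.succ - b i.castSucc - c/(n+1))^2 :=
    Finset.sum_nonneg fun i _ => sq_nonneg _
  have hA : (b 0 - c/(2*((n:ℝ)+1)))^2 = 0 := by
    nlinarith [sq_nonneg (b 0 - c/(2*((n:ℝ)+1))), sq_nonneg (b (Fin.last n) - c + c/(2*((n:ℝ)+1)))]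
  have hSz : ∑ i : Fin n, (b i.succ - b i.castSucc - c/((n:ℝ)+1))^2 = 0 := by
    nlinarith [sq_nonneg (b 0 - c/(2*((n:ℝ)+1))), sq_nonneg (b (Fin.last n) - c + c/(2*((n:ℝ)+1)))]
  have hb0 : b 0 = c/(2*((n:ℝ)+1)) := by
    have := pow_eq_zero_iff (n := 2) (by norm_num) |>.1 hA
    linarith
  have hdiff : ∀ i : Fin n, b i.succ = b i.castSucc + c/((n:ℝ)+1) := by
    intro i
    have := (Finset.sum_eq_zero_iff_of_nonneg (fun i _ => sq_nonneg _)).1 hSz i (Finset.mem_univ i)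
    have := pow_eq_zero_iff (n := 2) (by norm_num) |>.1 this
    linarith
  intro i
  induction i using Fin.induction with
  | zero =>
    rw [hb0, astar]
    norm_num
  | succ i ih =>
    rw [hdiff i, ih, astar, astar, Fin.val_succ, Fin.coe_castSucc]
    have hn1 : ((n:ℝ)+1) ≠ 0 := by positivity
    push_cast
    field_simp
    ring

lemma b_of_steps (n : ℕ) (c : ℝ) (b : Fin (n+1) → ℝ)
    (hb0 : b 0 = c/(2*((n:ℝ)+1)))
    (hd : ∀ i : Fin n, b i.succ = b i.castSucc + c/((n:ℝ)+1)) :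
    ∀ i, b i = astar n c i := by
  intro i
  induction i using Fin.induction with
  | zero => rw [hb0, astar]; norm_num
  | succ i ih =>
    rw [hd i, ih, astar, astar, Fin.val_succ, Fin.coe_castSucc]
    have hn1 : ((n:ℝ)+1) ≠ 0 := by positivity
    push_cast
    field_simp
    ring

lemma exists_far (n : ℕ) (c m : ℝ) (hm : 0 < m) (hcm : c = ((n:ℝ)+1)*m)
    (b : Fin (n+1) → ℝ) :
    ∃ u ∈ Set.Icc (0:ℝ) c, ∀ i, m/2 ≤ |u - b i| := by
  by_contra h
  push_neg at h
  have hsel : ∀ k : Fin (n+2), ∃ i, |((k:ℕ):ℝ)*m - b i| < m/2 := by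
    intro k
    refine h _ ⟨by positivity, ?_⟩
    rw [hcm]
    have : ((k:ℕ):ℝ) ≤ (n:ℝ)+1 := by
      have := k.isLt
      exact_mod_cast Nat.lt_succ_iff.1 this
    nlinarith
  choose f hf using hsel
  obtain ⟨k, k', hne, heq⟩ := Fintype.exists_ne_map_eq_of_card_lt f (by simp)
  have h1 : |((k:ℕ):ℝ)*m - ((k':ℕ):ℝ)*m| < m := by
    calc |((k:ℕ):ℝ)*m - ((k':ℕ):ℝ)*m|
        ≤ |((k:ℕ):ℝ)*m - b (f k)| + |b (f k) - ((k':ℕ):ℝ)*m| := abs_sub_le _ _ _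
      _ < m/2 + m/2 := by
          rw [heq]
          exact add_lt_add (by rw [← heq]; exact hf k) (by rw [abs_sub_comm]; exact hf k')
      _ = m := by ring
  have h2 : (1:ℝ) ≤ |((k:ℕ):ℝ) - ((k':ℕ):ℝ)| := by
    have hkk : ((k:ℕ):ℤ) ≠ ((k':ℕ):ℤ) := by
      intro hh
      exact hne (Fin.ext (by exact_mod_cast hh))
    have : (1:ℤ) ≤ |((k:ℕ):ℤ) - ((k':ℕ):ℤ)| := Int.one_le_abs (sub_ne_zero.2 hkk)
    have h3 : ((k:ℕ):ℝ) - ((k':ℕ):ℝ) = ((((k:ℕ):ℤ) - ((k':ℕ):ℤ) : ℤ) : ℝ) := by push_cast; ring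
    rw [h3, ← Int.cast_abs]
    exact_mod_cast this
  rw [show ((k:ℕ):ℝ)*m - ((k':ℕ):ℝ)*m = (((k:ℕ):ℝ) - ((k':ℕ):ℝ))*m by ring,
    abs_mul, abs_of_pos hm] at h1
  nlinarith

lemma strict_aux (n : ℕ) (c m : ℝ) (hm : 0 < m) (hcm : c = ((n:ℝ)+1)*m)
    (b : Fin (n+1) → ℝ)
    (h0 : b 0 ≤ m/2) (hlast : c - b (Fin.last n) ≤ m/2)
    (hd : ∀ i : Fin n, b i.succ - b i.castSucc ≤ m) :
    ∀ i, b i = astar n c i := by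
  have htel := telescope n b
  have hsum_le : ∑ i : Fin n, (b i.succ - b i.castSucc) ≤ (n:ℝ)*m := by
    calc ∑ i : Fin n, (b i.succ - b i.castSucc) ≤ ∑ _i : Fin n, m :=
          Finset.sum_le_sum fun i _ => by linarith [hd i]
      _ = (n:ℝ)*m := by simp [Finset.sum_const, Finset.card_univ]
  have hzero : ∑ i : Fin n, (m - (b i.succ - b i.castSucc)) = 0 := by
    have hge : (n:ℝ)*m ≤ ∑ i : Fin n, (b i.succ - b i.castSucc) := by
      rw [htel]; nlinarith
    have : ∑ i : Fin n, (m - (b i.succ - b i.castSucc))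
        = (n:ℝ)*m - ∑ i : Fin n, (b i.succ - b i.castSucc) := by
      rw [Finset.sum_sub_distrib]
      simp [Finset.sum_const, Finset.card_univ]
    rw [this]
    linarith
  have hdeq : ∀ i : Fin n, b i.succ = b i.castSucc + c/((n:ℝ)+1) := by
    intro i
    have := (Finset.sum_eq_zero_iff_of_nonneg
      (fun i _ => by linarith [hd i] : ∀ i ∈ Finset.univ, (0:ℝ) ≤ m - (b i.succ - b i.castSucc))).1
      hzero i (Finset.mem_univ i)
    have hmc : c/((n:ℝ)+1) = m := by rw [hcm]; field_simp
    linarith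
  have hb0 : b 0 = c/(2*((n:ℝ)+1)) := by
    have hbl : (n:ℝ)*m ≤ b (Fin.last n) - b 0 := by
      rw [← htel]
      calc (n:ℝ)*m = ∑ _i : Fin n, m := by
            simp [Finset.sum_const, Finset.card_univ]
        _ ≤ _ := Finset.sum_le_sum fun i _ => by
            have := hdeq i
            have hmc : c/((n:ℝ)+1) = m := by rw [hcm]; field_simp
            linarith
    have : c/(2*((n:ℝ)+1)) = m/2 := by rw [hcm]; field_simp
    rw [this]
    nlinarith
  exact b_of_steps n c b hb0 hdeq


/-- The unique global minimizer `x*` of `Q` minimizes the coverage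
metric `Φ` over `[0,1]ⁿ`, and is the unique minimizer of `Φ` among vectors with
nondecreasing entries in `[0,1]`. -/
theorem stmt5 (n : ℕ) (ρ : ℝ → ℝ) (ρmax : ℝ) (hρmax : 1 ≤ ρmax)
    (hρdiff : Differentiable ℝ ρ) (hρ : ∀ z, 1 ≤ ρ z ∧ ρ z ≤ ρmax)
    (xs : EuclideanSpace ℝ (Fin (n + 1)))
    (hmin : ∀ y, Qfun ρ n xs ≤ Qfun ρ n y) :
    (∀ z : EuclideanSpace ℝ (Fin (n + 1)), (∀ i, z i ∈ Set.Icc (0 : ℝ) 1) →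
      Φ ρ n xs ≤ Φ ρ n z)
    ∧ (∀ z : EuclideanSpace ℝ (Fin (n + 1)), (∀ i, z i ∈ Set.Icc (0 : ℝ) 1) →
        (∀ i j : Fin (n + 1), i ≤ j → z i ≤ z j) → z ≠ xs →
        Φ ρ n xs < Φ ρ n z) := by
  have hcont : Continuous ρ := hρdiff.continuous
  have h1 : ∀ z, 1 ≤ ρ z := fun z => (hρ z).1
  set c := Fint ρ 1 with hcdef
  have hFmem : ∀ t ∈ Set.Icc (0:ℝ) 1, Fint ρ t ∈ Set.Icc (0:ℝ) c := by
    intro t ht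
    have ha := Fint_gap hcont h1 ht.1
    have hb := Fint_gap hcont h1 ht.2
    rw [Fint_zero (ρ := ρ)] at ha
    exact ⟨by linarith [ht.1], by linarith [ht.2]⟩
  have hc : 1 ≤ c := by
    have := Fint_gap hcont h1 (by norm_num : (0:ℝ) ≤ 1)
    rw [Fint_zero (ρ := ρ)] at this
    linarith
  have hn1 : (0:ℝ) < (n:ℝ)+1 := by positivity
  set m := c/((n:ℝ)+1) with hmdef
  have hm : 0 < m := by rw [hmdef]; exact div_pos (by linarith) hn1
  have hcm : c = ((n:ℝ)+1)*m := by rw [hmdef]; field_simp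
  have hast : ∀ i : Fin (n+1), astar n c i = ((i:ℕ):ℝ)*m + m/2 := by
    intro i
    rw [astar, hcm]
    field_simp
  -- Step A : the F-values of the minimizer
  have hxs : ∀ i, Fint ρ (xs i) = astar n c i := by
    have hastmem : ∀ i : Fin (n+1), 0 ≤ astar n c i ∧ astar n c i ≤ c := by
      intro i
      have hile : ((i:ℕ):ℝ) ≤ n := by exact_mod_cast Nat.lt_succ_iff.1 i.isLt
      constructor
      · rw [astar]
        apply div_nonneg (by positivity) (by positivity)
      · rw [astar, div_le_iff₀ (by positivity)]
        nlinarith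
    choose y hy hyF using fun i => Fint_surj_s5 hcont h1 (hastmem i).1 (hastmem i).2
    have hQy : Qfun ρ n (WithLp.toLp 2 y) = c^2/((n:ℝ)+1) := by
      unfold Qfun
      rw [← hcdef]
      simp only [WithLp.ofLp_toLp, hyF]
      have h0 : astar n c 0 = m/2 := by rw [hast]; norm_num
      have hdiffs : ∀ i : Fin n, astar n c i.succ - astar n c i.castSucc = m := by
        intro i
        rw [hast, hast, Fin.val_succ, Fin.coe_castSucc]
        push_cast
        ring
      have hl : c - astar n c (Fin.last n) = m/2 := by
        rw [hast, Fin.val_last, hcm]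
        push_cast
        ring
      rw [h0, hl]
      rw [Finset.sum_congr rfl fun i _ => by rw [hdiffs i]]
      simp [Finset.sum_const, Finset.card_univ]
      rw [hcm]
      field_simp
      ring
    have h := hmin (WithLp.toLp 2 y)
    rw [hQy] at h
    exact qmin_char n c (fun i => Fint ρ (xs i)) h
  -- basic bounds for the inf
  have hdlow : ∀ (z : EuclideanSpace ℝ (Fin (n+1))) (y : ℝ),
      BddBelow (Set.range fun i : Fin (n+1) => dρ ρ y (z i)) := by
    intro z y
    refine ⟨0, ?_⟩
    rintro _ ⟨i, rfl⟩
    show (0:ℝ) ≤ dρ ρ y (z i)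
    rw [dρ_eq hcont h1]
    positivity
  haveI : Nonempty (Set.Icc (0:ℝ) 1) := ⟨⟨0, Set.mem_Icc.2 ⟨le_refl 0, by norm_num⟩⟩⟩
  -- Step B : Φ xs ≤ m/2
  have hPhixs : Φ ρ n xs ≤ m/2 := by
    unfold Φ
    apply ciSup_le
    rintro ⟨y, hy⟩
    have humem := hFmem y hy
    set u := Fint ρ y with hudef
    obtain ⟨i, hi1, hi2⟩ : ∃ i : Fin (n+1), ((i:ℕ):ℝ)*m ≤ u ∧ u ≤ (((i:ℕ):ℝ)+1)*m := by
      rcases le_or_gt (⌊u/m⌋₊) n with hfl | hfl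
      · refine ⟨⟨⌊u/m⌋₊, by omega⟩, ?_, ?_⟩
        · have h2 := Nat.floor_le (div_nonneg humem.1 hm.le)
          calc ((⌊u/m⌋₊:ℕ):ℝ)*m ≤ (u/m)*m := by nlinarith
            _ = u := by field_simp
        · have h2 := Nat.lt_floor_add_one (u/m)
          have : u < ((⌊u/m⌋₊:ℝ)+1)*m := by
            rw [← div_lt_iff₀ hm]
            exact_mod_cast h2
          exact this.le
      · refine ⟨⟨n, by omega⟩, ?_, ?_⟩
        · have hge : ((n:ℝ)+1) ≤ (⌊u/m⌋₊:ℝ) := by exact_mod_cast hfl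
          have h2 : ((n:ℝ)+1) ≤ u/m := le_trans hge (Nat.floor_le (div_nonneg humem.1 hm.le))
          have huc : c ≤ u := by
            rw [hcm]
            calc ((n:ℝ)+1)*m ≤ (u/m)*m := by nlinarith
              _ = u := by field_simp
          have : (0:ℝ) ≤ m := hm.le
          simp only
          nlinarith [humem.2]
        · simp only
          rw [← hcm] at *
          nlinarith [humem.2]
    have hkey : dρ ρ y (xs i) ≤ m/2 := by
      rw [dρ_eq hcont h1, hxs i, hast i, ← hudef]
      rw [abs_le]
      constructor <;> [linarith; linarith]
    exact le_trans (ciInf_le (hdlow xs y) i) hkey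
  -- BddAbove for the sup
  have hbddA : ∀ z : EuclideanSpace ℝ (Fin (n+1)), (∀ i, z i ∈ Set.Icc (0:ℝ) 1) →
      BddAbove (Set.range fun y : Set.Icc (0:ℝ) 1 => ⨅ i : Fin (n+1), dρ ρ (y:ℝ) (z i)) := by
    intro z hzmem
    refine ⟨c, ?_⟩
    rintro _ ⟨y, rfl⟩
    refine le_trans (ciInf_le (hdlow z y) 0) ?_
    rw [dρ_eq hcont h1]
    have hz0 := hFmem _ (hzmem 0)
    have hyy := hFmem _ y.2
    rw [abs_le]
    constructor <;> [linarith [hz0.1, hz0.2, hyy.1, hyy.2]; linarith [hz0.1, hz0.2, hyy.1, hyy.2]]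
  -- Step C : lower bound for every z in the cube
  have hlow : ∀ z : EuclideanSpace ℝ (Fin (n+1)), (∀ i, z i ∈ Set.Icc (0:ℝ) 1) →
      m/2 ≤ Φ ρ n z := by
    intro z hzmem
    obtain ⟨u, humem, hufar⟩ := exists_far n c m hm hcm (fun i => Fint ρ (z i))
    obtain ⟨y, hy, hyu⟩ := Fint_surj_s5 hcont h1 humem.1 humem.2
    have hstep : m/2 ≤ ⨅ i : Fin (n+1), dρ ρ y (z i) := by
      apply le_ciInf
      intro i
      rw [dρ_eq hcont h1, hyu, abs_sub_comm]
      exact hufar i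
    unfold Φ
    exact le_trans hstep (le_ciSup (hbddA z hzmem) ⟨y, hy⟩)
  constructor
  · intro z hz
    exact le_trans hPhixs (hlow z hz)
  · intro z hz hsort hne
    refine lt_of_le_of_lt hPhixs ?_
    by_contra hle
    push_neg at hle
    set b := fun i : Fin (n+1) => Fint ρ (z i) with hbdef
    have hbmono : ∀ i j : Fin (n+1), i ≤ j → b i ≤ b j := fun i j hij =>
      (Fint_strictMono hcont h1).monotone (hsort i j hij)
    have hbmem : ∀ i, b i ∈ Set.Icc (0:ℝ) c := fun i => hFmem _ (hz i)
    unfold Φ at hle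
    -- (i) b 0 ≤ m/2
    have hi0 : b 0 ≤ m/2 := by
      have h0m : (0:ℝ) ∈ Set.Icc (0:ℝ) 1 := Set.mem_Icc.2 ⟨le_refl 0, by norm_num⟩
      have hin : b 0 ≤ ⨅ i : Fin (n+1), dρ ρ (0:ℝ) (z i) := by
        apply le_ciInf
        intro i
        rw [dρ_eq hcont h1, Fint_zero (ρ := ρ), sub_zero, abs_of_nonneg (hbmem i).1]
        exact hbmono 0 i (Fin.zero_le i)
      exact le_trans hin (le_trans (le_ciSup (hbddA z hz) ⟨0, h0m⟩) hle)
    -- (ii) c - b last ≤ m/2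
    have hil : c - b (Fin.last n) ≤ m/2 := by
      have h1m : (1:ℝ) ∈ Set.Icc (0:ℝ) 1 := Set.mem_Icc.2 ⟨by norm_num, le_refl 1⟩
      have hin : c - b (Fin.last n) ≤ ⨅ i : Fin (n+1), dρ ρ (1:ℝ) (z i) := by
        apply le_ciInf
        intro i
        rw [dρ_eq hcont h1, ← hcdef, abs_sub_comm, abs_of_nonneg (by linarith [(hbmem i).2])]
        have := hbmono i (Fin.last n) (Fin.le_last i)
        linarith
      exact le_trans hin (le_trans (le_ciSup (hbddA z hz) ⟨1, h1m⟩) hle)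
    -- (iii) consecutive gaps ≤ m
    have hid : ∀ i : Fin n, b i.succ - b i.castSucc ≤ m := by
      intro i
      have hcs : b i.castSucc ≤ b i.succ := hbmono _ _ i.castSucc_lt_succ.le
      have humem : (b i.succ + b i.castSucc)/2 ∈ Set.Icc (0:ℝ) c := by
        constructor
        · linarith [(hbmem i.castSucc).1, (hbmem i.succ).1]
        · linarith [(hbmem i.castSucc).2, (hbmem i.succ).2]
      obtain ⟨y, hy, hyu⟩ := Fint_surj_s5 hcont h1 humem.1 humem.2
      have hstep : (b i.succ - b i.castSucc)/2 ≤ ⨅ j : Fin (n+1), dρ ρ y (z j) := by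
        apply le_ciInf
        intro j
        rw [dρ_eq hcont h1, hyu]
        rcases le_or_gt (j:ℕ) ((i:ℕ)) with hj | hj
        · have hbj : b j ≤ b i.castSucc := by
            apply hbmono
            rw [Fin.le_def, Fin.coe_castSucc]
            exact hj
          calc (b i.succ - b i.castSucc)/2
              ≤ (b i.succ + b i.castSucc)/2 - b j := by linarith
            _ ≤ |b j - (b i.succ + b i.castSucc)/2| := by
                rw [abs_sub_comm]
                exact le_abs_self _
        · have hbj : b i.succ ≤ b j := by
            apply hbmono
            rw [Fin.le_def, Fin.val_succ]
            exact hj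
          calc (b i.succ - b i.castSucc)/2
              ≤ b j - (b i.succ + b i.castSucc)/2 := by linarith
            _ ≤ |b j - (b i.succ + b i.castSucc)/2| := le_abs_self _
      have := le_trans hstep (le_trans (le_ciSup (hbddA z hz) ⟨y, hy⟩) hle)
      linarith
    have hbeq := strict_aux n c m hm hcm b hi0 hil hid
    apply hne
    ext i
    refine (Fint_strictMono hcont h1).injective ?_
    rw [hxs i, ← hbeq i]
end

section
/- For every x ∈ ℝⁿ, ‖∇Q(x)‖₂² ≥ (4/n²)·(Q(x) − Q(x*)), where x* is the unique global minimizer of Q and ∇Q denotes the gradient of Q. -/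
open intervalIntegral Finset

namespace Stmt8Aux

/-- quadratic form -/
def Bform (n : ℕ) (v : Fin (n+1) → ℝ) : ℝ :=
  2 * (v 0)^2 + (∑ i : Fin n, (v i.succ - v i.castSucc)^2) + 2 * (v (Fin.last n))^2

/-- linear form: directional derivative of `qY` at `a` in direction `v`. -/
def Lform (n : ℕ) (c : ℝ) (a v : Fin (n+1) → ℝ) : ℝ :=
  4 * a 0 * v 0 + (∑ i : Fin n, 2 * (a i.succ - a i.castSucc) * (v i.succ - v i.castSucc))
    - 4 * (c - a (Fin.last n)) * (v (Fin.last n))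

def qY (n : ℕ) (c : ℝ) (a : Fin (n+1) → ℝ) : ℝ :=
  2 * (a 0)^2 + (∑ i : Fin n, (a i.succ - a i.castSucc)^2) + 2 * (c - a (Fin.last n))^2

lemma Bform_nonneg (n : ℕ) (v : Fin (n+1) → ℝ) : 0 ≤ Bform n v := by
  have : 0 ≤ ∑ i : Fin n, (v i.succ - v i.castSucc)^2 :=
    Finset.sum_nonneg fun i _ => sq_nonneg _
  unfold Bform; positivity

lemma qY_expand (n : ℕ) (c t : ℝ) (a v : Fin (n+1) → ℝ) :
    qY n c (fun j => a j + t * v j) = qY n c a + t * Lform n c a v + t^2 * Bform n v := by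
  unfold qY Lform Bform
  rw [Finset.sum_congr rfl (fun i _ => show
      ((a i.succ + t * v i.succ) - (a i.castSucc + t * v i.castSucc))^2
      = (a i.succ - a i.castSucc)^2
        + t * (2 * (a i.succ - a i.castSucc) * (v i.succ - v i.castSucc))
        + t^2 * (v i.succ - v i.castSucc)^2 from by ring),
    Finset.sum_add_distrib, Finset.sum_add_distrib, ← Finset.mul_sum, ← Finset.mul_sum]
  ring

lemma Lform_shift (n : ℕ) (c : ℝ) (a v : Fin (n+1) → ℝ) :
    Lform n c (fun j => a j + v j) v = Lform n c a v + 2 * Bform n v := by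
  unfold Lform Bform
  rw [Finset.sum_congr rfl (fun i _ => show
      2 * ((a i.succ + v i.succ) - (a i.castSucc + v i.castSucc)) * (v i.succ - v i.castSucc)
      = 2 * (a i.succ - a i.castSucc) * (v i.succ - v i.castSucc)
        + 2 * (v i.succ - v i.castSucc)^2 from by ring),
    Finset.sum_add_distrib, ← Finset.mul_sum]
  ring

lemma nat_tele (n : ℕ) (w : ℕ → ℝ) (j : ℕ) (hj : j ≤ n) :
    (w j)^2 ≤ (n + 1 : ℝ) * ((w 0)^2 + ∑ i ∈ Finset.range n, (w (i+1) - w i)^2) := by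
  set f : ℕ → ℝ := fun k => if k = 0 then w 0 else w k - w (k-1) with hf
  have hsum : ∑ i ∈ Finset.range (j+1), f i = w j := by
    rw [Finset.sum_range_succ']
    simp only [hf]
    have h1 : ∀ i ∈ Finset.range j, (if i + 1 = 0 then w 0 else w (i+1) - w (i+1-1))
        = w (i+1) - w i := by intro i _; simp
    rw [Finset.sum_congr rfl h1, Finset.sum_range_sub (fun i => w i)]
    simp
  have hcs := sq_sum_le_card_mul_sum_sq (s := Finset.range (j+1)) (f := f)
  rw [hsum] at hcs
  have hsq : ∑ i ∈ Finset.range (j+1), (f i)^2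
      ≤ (w 0)^2 + ∑ i ∈ Finset.range n, (w (i+1) - w i)^2 := by
    rw [Finset.sum_range_succ']
    have h1 : ∀ i ∈ Finset.range j, (f (i+1))^2 = (w (i+1) - w i)^2 := by
      intro i _; simp [hf]
    rw [Finset.sum_congr rfl h1]
    have h2 : (f 0)^2 = (w 0)^2 := by simp [hf]
    rw [h2, add_comm]
    have h3 := Finset.sum_le_sum_of_subset_of_nonneg (f := fun i => (w (i+1) - w i)^2)
      (Finset.range_subset_range.2 hj) (fun i _ _ => sq_nonneg _)
    linarith
  calc (w j)^2 ≤ (↑(j+1) : ℝ) * ∑ i ∈ Finset.range (j+1), (f i)^2 := by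
        simpa using hcs
    _ ≤ (n + 1 : ℝ) * ((w 0)^2 + ∑ i ∈ Finset.range n, (w (i+1) - w i)^2) := by
        apply mul_le_mul
        · push_cast; linarith [(Nat.cast_le (α := ℝ)).2 hj]
        · exact hsq
        · exact Finset.sum_nonneg fun i _ => sq_nonneg _
        · positivity

lemma spectral (n : ℕ) (v : Fin (n+1) → ℝ) :
    ∑ j : Fin (n+1), (v j)^2 ≤ ((n : ℝ) + 1)^2 * Bform n v := by
  set w : ℕ → ℝ := fun k => if h : k < n + 1 then v ⟨k, h⟩ else 0 with hw
  have hwv : ∀ j : Fin (n+1), w j.1 = v j := by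
    intro j; show (if h : j.1 < n + 1 then v ⟨j.1, h⟩ else 0) = v j; rw [dif_pos j.2]
  have hsum1 : ∑ j : Fin (n+1), (v j)^2 = ∑ k ∈ Finset.range (n+1), (w k)^2 := by
    rw [← Fin.sum_univ_eq_sum_range (fun k => (w k)^2) (n+1)]
    exact Finset.sum_congr rfl fun j _ => by rw [hwv j]
  have hw0 : w 0 = v 0 := hwv 0
  have hD : ∑ i ∈ Finset.range n, (w (i+1) - w i)^2
      = ∑ i : Fin n, (v i.succ - v i.castSucc)^2 := by
    rw [← Fin.sum_univ_eq_sum_range (fun i => (w (i+1) - w i)^2) n]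
    refine Finset.sum_congr rfl fun i _ => ?_
    have h1 : w (i.1 + 1) = v i.succ := hwv i.succ
    have h2 : w i.1 = v i.castSucc := hwv i.castSucc
    rw [h1, h2]
  have key : ∀ k ∈ Finset.range (n+1),
      (w k)^2 ≤ (n + 1 : ℝ) * ((w 0)^2 + ∑ i ∈ Finset.range n, (w (i+1) - w i)^2) := by
    intro k hk
    exact nat_tele n w k (Nat.lt_succ_iff.1 (Finset.mem_range.1 hk))
  have h := Finset.sum_le_sum key
  rw [← hsum1, Finset.sum_const, Finset.card_range] at h
  have hBge : (w 0)^2 + ∑ i ∈ Finset.range n, (w (i+1) - w i)^2 ≤ Bform n v := by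
    rw [hw0, hD]
    unfold Bform
    nlinarith [sq_nonneg (v 0), sq_nonneg (v (Fin.last n))]
  have hn1 : (0:ℝ) ≤ (n + 1 : ℝ) := by positivity
  calc ∑ j : Fin (n+1), (v j)^2
      ≤ (n+1 : ℕ) • ((n + 1 : ℝ) * ((w 0)^2 + ∑ i ∈ Finset.range n, (w (i+1) - w i)^2)) := h
    _ = (n + 1 : ℝ) * ((n + 1 : ℝ) * ((w 0)^2 + ∑ i ∈ Finset.range n, (w (i+1) - w i)^2)) := by
        push_cast [nsmul_eq_mul]; ring
    _ ≤ ((n : ℝ) + 1)^2 * Bform n v := by nlinarith [hBge, hn1]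



lemma Fint_hasDerivAt {ρ : ℝ → ℝ} (hc : Continuous ρ) (t : ℝ) :
    HasDerivAt (Fint ρ) (ρ t) t :=
  (hc.integral_hasStrictDerivAt 0 t).hasDerivAt

lemma Fint_surj {ρ : ℝ → ℝ} (hc : Continuous ρ) (h1 : ∀ z, 1 ≤ ρ z) :
    Function.Surjective (Fint ρ) := by
  have hcont : Continuous (Fint ρ) :=
    Differentiable.continuous (fun t => (Fint_hasDerivAt hc t).differentiableAt)
  have hge : ∀ t : ℝ, 0 ≤ t → t ≤ Fint ρ t := by
    intro t ht
    have := intervalIntegral.integral_mono_on (μ := MeasureTheory.volume) ht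
      (_root_.intervalIntegrable_const (c := (1:ℝ))) (hc.intervalIntegrable 0 t)
      (fun z _ => h1 z)
    simpa [Fint] using this
  have hle : ∀ t : ℝ, t ≤ 0 → Fint ρ t ≤ t := by
    intro t ht
    have := intervalIntegral.integral_mono_on (μ := MeasureTheory.volume) ht
      (_root_.intervalIntegrable_const (c := (1:ℝ))) (hc.intervalIntegrable t 0)
      (fun z _ => h1 z)
    have hsymm : Fint ρ t = - ∫ z in t..(0:ℝ), ρ z := by
      rw [Fint, intervalIntegral.integral_symm]
    rw [hsymm]
    simp only [intervalIntegral.integral_const, smul_eq_mul, mul_one] at this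
    linarith
  apply hcont.surjective
  · exact Filter.tendsto_atTop_mono' Filter.atTop
      (Filter.eventually_atTop.2 ⟨0, fun t ht => hge t ht⟩) Filter.tendsto_id
  · exact Filter.tendsto_atBot_mono' Filter.atBot
      (Filter.eventually_atBot.2 ⟨0, fun t ht => hle t ht⟩) Filter.tendsto_id

end Stmt8Aux

open Stmt8Aux in
/-- For every `x ∈ ℝⁿ`, `‖∇Q(x)‖₂² ≥ (4/n²)·(Q(x) - Q(x*))`, where `x*`
is the unique global minimizer of `Q`. -/
theorem stmt8 (n : ℕ) (ρ : ℝ → ℝ) (ρmax : ℝ) (hρmax : 1 ≤ ρmax)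
    (hρdiff : Differentiable ℝ ρ) (hρ : ∀ z, 1 ≤ ρ z ∧ ρ z ≤ ρmax)
    (xs : EuclideanSpace ℝ (Fin (n + 1)))
    (hmin : ∀ y, Qfun ρ n xs ≤ Qfun ρ n y) :
    ∀ x : EuclideanSpace ℝ (Fin (n + 1)),
      ‖gradient (Qfun ρ n) x‖ ^ 2 ≥ (4 / ((n : ℝ) + 1) ^ 2) * (Qfun ρ n x - Qfun ρ n xs) := by
  intro x
  classical
  have hc : Continuous ρ := hρdiff.continuous
  have hF : ∀ t, HasDerivAt (Fint ρ) (ρ t) t := Fint_hasDerivAt hc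
  have hsurj := Fint_surj hc (fun z => (hρ z).1)
  have hρpos : ∀ z, (0:ℝ) < ρ z := fun z => lt_of_lt_of_le zero_lt_one (hρ z).1
  set c : ℝ := Fint ρ 1 with hcdef
  have hQy : ∀ w : EuclideanSpace ℝ (Fin (n+1)), Qfun ρ n w = qY n c (fun j => Fint ρ (w j)) :=
    fun w => rfl
  -- the minimizer kills the linear form
  have hLzero : ∀ u : Fin (n+1) → ℝ, Lform n c (fun j => Fint ρ (xs j)) u = 0 := by
    intro u
    have hineq : ∀ t : ℝ,
        0 ≤ t * Lform n c (fun j => Fint ρ (xs j)) u + t^2 * Bform n u := by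
      intro t
      obtain ⟨x', hx'⟩ : ∃ x' : EuclideanSpace ℝ (Fin (n+1)),
          ∀ j, Fint ρ (x' j) = Fint ρ (xs j) + t * u j := by
        choose g hg using fun j : Fin (n+1) => hsurj (Fint ρ (xs j) + t * u j)
        exact ⟨(WithLp.equiv 2 _).symm g, hg⟩
      have h1 : Qfun ρ n x' = qY n c (fun j => Fint ρ (xs j) + t * u j) := by
        rw [hQy x']
        congr 1
        exact funext fun j => hx' j
      have h2 := hmin x'
      rw [hQy xs, h1, qY_expand] at h2
      linarith
    have hB := Bform_nonneg n u
    set L := Lform n c (fun j => Fint ρ (xs j)) u with hL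
    set B := Bform n u with hBdef
    have ht := hineq (-(L)/(B+1))
    have hB1 : (0:ℝ) < B + 1 := by linarith
    have hexp : ((B+1)*(B+1)) * (-(L) / (B + 1) * L + (-(L) / (B + 1)) ^ 2 * B) = -(L^2) := by
      field_simp
      ring
    have h2 : (0:ℝ) ≤ -(L^2) := by
      rw [← hexp]
      exact mul_nonneg (by positivity) ht
    have h3 : L^2 = 0 := le_antisymm (by linarith) (sq_nonneg L)
    exact pow_eq_zero_iff (by norm_num) |>.1 h3
  -- difference of Q values
  set v : Fin (n+1) → ℝ := fun j => Fint ρ (x j) - Fint ρ (xs j) with hv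
  have hdiff : Qfun ρ n x - Qfun ρ n xs = Bform n v := by
    have h1 : (fun j => Fint ρ (x j)) = fun j => Fint ρ (xs j) + 1 * (v j) := by
      funext j; simp [hv]
    rw [hQy x, hQy xs, h1, qY_expand, hLzero v]; ring
  -- the direction u
  set u : EuclideanSpace ℝ (Fin (n+1)) := (WithLp.equiv 2 _).symm (fun j => v j / ρ (x j)) with hu
  have hru : ∀ j, ρ (x j) * u j = v j := by
    intro j
    have : u j = v j / ρ (x j) := rfl
    rw [this, mul_comm, div_mul_cancel₀ _ (ne_of_gt (hρpos (x j)))]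
  -- derivative of Qfun at x
  have hcoord : ∀ j : Fin (n+1),
      HasFDerivAt (fun z : EuclideanSpace ℝ (Fin (n+1)) => Fint ρ (z j))
        (ρ (x j) • (EuclideanSpace.proj j : EuclideanSpace ℝ (Fin (n+1)) →L[ℝ] ℝ)) x :=
    by
    intro j
    have hp : HasFDerivAt (fun z : EuclideanSpace ℝ (Fin (n+1)) => z j)
        (EuclideanSpace.proj (𝕜 := ℝ) j) x := by
      have h := ContinuousLinearMap.hasFDerivAt (x := x)
        (EuclideanSpace.proj (𝕜 := ℝ) (ι := Fin (n+1)) j)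
      exact h
    exact HasDerivAt.comp_hasFDerivAt x (hF (x j)) hp
  have hsq : ∀ (f : EuclideanSpace ℝ (Fin (n+1)) → ℝ) (D : EuclideanSpace ℝ (Fin (n+1)) →L[ℝ] ℝ),
      HasFDerivAt f D x → HasFDerivAt (fun z => (f z)^2) ((((2:ℕ):ℝ) * (f x)^(2-1)) • D) x :=
    fun f D hf => HasDerivAt.comp_hasFDerivAt x (hasDerivAt_pow 2 (f x)) hf
  have h1 := (hsq _ _ (hcoord 0)).const_mul (2:ℝ)
  have h2 := HasFDerivAt.fun_sum (u := (Finset.univ : Finset (Fin n))) (fun i _ =>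
    hsq _ _ ((hcoord (Fin.succ i)).sub (hcoord (Fin.castSucc i))))
  have h3 := (hsq _ _ ((hcoord (Fin.last n)).const_sub c)).const_mul (2:ℝ)
  have hQtot : HasFDerivAt (Qfun ρ n) _ x := (h1.fun_add h2).fun_add h3
  have hinner : (inner ℝ (gradient (Qfun ρ n) x) u : ℝ) = Lform n c (fun j => Fint ρ (x j)) v := by
    rw [hQtot.hasGradientAt.gradient, InnerProductSpace.toDual_symm_apply]
    simp only [ContinuousLinearMap.add_apply, ContinuousLinearMap.smul_apply,
      ContinuousLinearMap.coe_sum', Finset.sum_apply, ContinuousLinearMap.sub_apply,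
      ContinuousLinearMap.neg_apply, smul_eq_mul, PiLp.proj_apply, pow_one]
    simp only [hru]
    unfold Lform
    norm_num
    ring
  -- Lform at the current point equals 2 * Bform
  have hLy : Lform n c (fun j => Fint ρ (x j)) v = 2 * Bform n v := by
    have h1 : (fun j => Fint ρ (x j)) = fun j => Fint ρ (xs j) + v j := by
      funext j; simp [hv]
    rw [h1, Lform_shift, hLzero v]; ring
  have h2B : 2 * Bform n v ≤ ‖gradient (Qfun ρ n) x‖ * ‖u‖ := by
    rw [← hLy, ← hinner]; exact real_inner_le_norm _ _
  have hnormu : ‖u‖^2 ≤ ((n:ℝ)+1)^2 * Bform n v := by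
    have h1 : ‖u‖^2 = ∑ j : Fin (n+1), (u j)^2 := by
      rw [EuclideanSpace.norm_eq,
        Real.sq_sqrt (Finset.sum_nonneg fun j _ => sq_nonneg _)]
      exact Finset.sum_congr rfl fun j _ => by rw [Real.norm_eq_abs, sq_abs]
    have h2 : ∀ j : Fin (n+1), (u j)^2 ≤ (v j)^2 := by
      intro j
      have hvj : v j = ρ (x j) * u j := (hru j).symm
      have h1j : 1 ≤ ρ (x j) := (hρ (x j)).1
      have hsq1 : 1 ≤ ρ (x j)^2 := by nlinarith
      calc (u j)^2 ≤ ρ (x j)^2 * (u j)^2 := le_mul_of_one_le_left (sq_nonneg _) hsq1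
        _ = (v j)^2 := by rw [hvj]; ring
    calc ‖u‖^2 = ∑ j : Fin (n+1), (u j)^2 := h1
      _ ≤ ∑ j : Fin (n+1), (v j)^2 := Finset.sum_le_sum fun j _ => h2 j
      _ ≤ ((n:ℝ)+1)^2 * Bform n v := spectral n v
  have hBnn := Bform_nonneg n v
  rw [hdiff]
  have hn2 : (0:ℝ) < ((n:ℝ)+1)^2 := by positivity
  rcases eq_or_lt_of_le hBnn with h0 | hpos
  · rw [← h0]
    simp only [mul_zero]
    positivity
  · have hmul := mul_le_mul_of_nonneg_left hnormu (sq_nonneg ‖gradient (Qfun ρ n) x‖)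
    have hsq := mul_self_le_mul_self (by linarith) h2B
    have hkey : 4 * (Bform n v)^2
        ≤ ‖gradient (Qfun ρ n) x‖^2 * (((n:ℝ)+1)^2 * Bform n v) := by
      nlinarith [hmul, hsq]
    rw [ge_iff_le, div_mul_eq_mul_div, div_le_iff₀ hn2]
    nlinarith [hkey, hpos]
end

section
/- For every x ∈ ℝⁿ, Q(x) − Q(x*) ≥ (1/n²)·‖x − x*‖₂², where x* is the unique global minimizer of Q. -/
open intervalIntegral

/-- The Lyapunov function expressed in the `F`-coordinates. -/
noncomputable def Efun (c : ℝ) (n : ℕ) (u : Fin (n+1) → ℝ) : ℝ :=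
  2 * (u 0) ^ 2 + (∑ i : Fin n, (u i.succ - u i.castSucc) ^ 2)
    + 2 * (c - u (Fin.last n)) ^ 2

/-- The linear part of the expansion of `Efun` around `g`. -/
noncomputable def Lfun (c : ℝ) (n : ℕ) (g w : Fin (n+1) → ℝ) : ℝ :=
  4 * (g 0) * (w 0)
    + (∑ i : Fin n, 2 * (g i.succ - g i.castSucc) * (w i.succ - w i.castSucc))
    - 4 * (c - g (Fin.last n)) * (w (Fin.last n))

/-- The quadratic part of the expansion of `Efun`. -/
noncomputable def Bfun (n : ℕ) (w : Fin (n+1) → ℝ) : ℝ :=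
  2 * (w 0) ^ 2 + (∑ i : Fin n, (w i.succ - w i.castSucc) ^ 2)
    + 2 * (w (Fin.last n)) ^ 2

lemma Efun_expand (c : ℝ) (n : ℕ) (g w : Fin (n+1) → ℝ) (t : ℝ) :
    Efun c n (fun i => g i + t * w i)
      = Efun c n g + t * Lfun c n g w + t ^ 2 * Bfun n w := by
  simp only [Efun, Lfun, Bfun]
  have h : ∀ i : Fin n,
      ((g i.succ + t * w i.succ) - (g i.castSucc + t * w i.castSucc)) ^ 2
        = (g i.succ - g i.castSucc) ^ 2
          + t * (2 * (g i.succ - g i.castSucc) * (w i.succ - w i.castSucc))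
          + t ^ 2 * (w i.succ - w i.castSucc) ^ 2 := fun i => by ring
  rw [Finset.sum_congr rfl (fun i _ => h i), Finset.sum_add_distrib,
    Finset.sum_add_distrib, ← Finset.mul_sum, ← Finset.mul_sum]
  ring

lemma Bfun_nonneg (n : ℕ) (w : Fin (n+1) → ℝ) : 0 ≤ Bfun n w := by
  have : 0 ≤ ∑ i : Fin n, (w i.succ - w i.castSucc) ^ 2 :=
    Finset.sum_nonneg fun i _ => sq_nonneg _
  simp only [Bfun]
  nlinarith [sq_nonneg (w 0), sq_nonneg (w (Fin.last n))]

lemma key_quad (L B : ℝ) (h : ∀ t : ℝ, 0 ≤ t * L + t ^ 2 * B) : L = 0 := by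
  have hB : 0 ≤ B := by have h1 := h 1; have h2 := h (-1); nlinarith
  by_contra hL
  have hB1 : (0:ℝ) < B + 1 := by linarith
  have h1 := h (-(L / (B + 1)))
  have he : -(L / (B + 1)) * L + (-(L / (B + 1))) ^ 2 * B
      = -(L ^ 2) / (B + 1) ^ 2 * 1 := by
    field_simp
    ring
  rw [he, mul_one] at h1
  have hpos : (0:ℝ) < (B + 1) ^ 2 := by positivity
  rw [le_div_iff₀ hpos, zero_mul] at h1
  have hL2 : 0 < L ^ 2 := by positivity
  linarith

lemma sum_sq_bound (n : ℕ) (v : Fin (n+1) → ℝ) :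
    ∑ i : Fin (n+1), (v i) ^ 2
      ≤ ((n:ℝ)+1) ^ 2 * ((v 0) ^ 2 + ∑ i : Fin n, (v i.succ - v i.castSucc) ^ 2) := by
  set w : ℕ → ℝ := fun j => v ⟨min j n, by omega⟩ with hw
  have hwv : ∀ i : Fin (n+1), w i.val = v i := by
    intro i
    have : (⟨min i.val n, by omega⟩ : Fin (n+1)) = i := by
      apply Fin.ext
      simp only
      omega
    simp only [hw, this]
  have hw0 : w 0 = v 0 := hwv 0
  have hsum1 : ∑ i : Fin (n+1), (v i) ^ 2 = ∑ j ∈ Finset.range (n+1), (w j) ^ 2 := by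
    rw [← Fin.sum_univ_eq_sum_range (fun j => (w j) ^ 2)]
    exact Finset.sum_congr rfl fun i _ => by rw [hwv]
  have hsum2 : ∑ i : Fin n, (v i.succ - v i.castSucc) ^ 2
      = ∑ k ∈ Finset.range n, (w (k+1) - w k) ^ 2 := by
    rw [← Fin.sum_univ_eq_sum_range (fun k => (w (k+1) - w k) ^ 2)]
    refine Finset.sum_congr rfl fun i _ => ?_
    have h1 : w (i.val + 1) = v i.succ := by
      have : (⟨min (i.val+1) n, by omega⟩ : Fin (n+1)) = i.succ := by
        apply Fin.ext
        simp only [Fin.val_succ]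
        omega
      simp only [hw, this]
    have h2 : w i.val = v i.castSucc := by
      have : (⟨min i.val n, by omega⟩ : Fin (n+1)) = i.castSucc := by
        apply Fin.ext
        simp only [Fin.coe_castSucc]
        omega
      simp only [hw, this]
    rw [h1, h2]
  rw [hsum1, hsum2, ← hw0]
  set D := ∑ k ∈ Finset.range n, (w (k+1) - w k) ^ 2 with hD
  have hDnn : 0 ≤ D := Finset.sum_nonneg fun k _ => sq_nonneg _
  -- auxiliary sequence
  set a : ℕ → ℝ := fun k => if k = 0 then w 0 else w k - w (k-1) with ha
  have hteleS : ∀ j, ∑ k ∈ Finset.range (j+1), a k = w j := by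
    intro j
    rw [Finset.sum_range_succ']
    have : ∀ k ∈ Finset.range j, a (k+1) = w (k+1) - w k := by
      intro k _; simp [ha]
    rw [Finset.sum_congr rfl this, Finset.sum_range_sub (fun k => w k)]
    simp [ha]
  have hasq : ∀ j, j ≤ n → ∑ k ∈ Finset.range (j+1), (a k) ^ 2 ≤ (w 0) ^ 2 + D := by
    intro j hj
    rw [Finset.sum_range_succ']
    have h1 : ∑ k ∈ Finset.range j, (a (k+1)) ^ 2
        = ∑ k ∈ Finset.range j, (w (k+1) - w k) ^ 2 := by
      refine Finset.sum_congr rfl fun k _ => ?_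
      simp [ha]
    have h2 : ∑ k ∈ Finset.range j, (w (k+1) - w k) ^ 2 ≤ D := by
      rw [hD]
      exact Finset.sum_le_sum_of_subset_of_nonneg
        (Finset.range_subset_range.2 hj) (fun k _ _ => sq_nonneg _)
    have h3 : a 0 = w 0 := by simp [ha]
    rw [h1, h3]
    linarith
  have hper : ∀ j ∈ Finset.range (n+1), (w j) ^ 2 ≤ ((n:ℝ)+1) * ((w 0) ^ 2 + D) := by
    intro j hj
    have hjn : j ≤ n := by
      simp only [Finset.mem_range] at hj; omega
    have hcs := sq_sum_le_card_mul_sum_sq (s := Finset.range (j+1)) (f := a)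
    rw [hteleS j] at hcs
    simp only [Finset.card_range] at hcs
    have hle := hasq j hjn
    have hj1 : ((j:ℝ) + 1) ≤ (n:ℝ) + 1 := by
      have : (j:ℝ) ≤ (n:ℝ) := by exact_mod_cast hjn
      linarith
    calc (w j) ^ 2 ≤ ((j+1 : ℕ) : ℝ) * ∑ k ∈ Finset.range (j+1), (a k) ^ 2 := hcs
      _ ≤ ((n:ℝ)+1) * ((w 0) ^ 2 + D) := by
          push_cast
          have hnn : 0 ≤ ∑ k ∈ Finset.range (j+1), (a k) ^ 2 :=
            Finset.sum_nonneg fun k _ => sq_nonneg _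
          have h0 : (0:ℝ) ≤ (w 0) ^ 2 + D := by positivity
          nlinarith
  calc ∑ j ∈ Finset.range (n+1), (w j) ^ 2
      ≤ ∑ j ∈ Finset.range (n+1), ((n:ℝ)+1) * ((w 0) ^ 2 + D) :=
        Finset.sum_le_sum hper
    _ = ((n:ℝ)+1) ^ 2 * ((w 0) ^ 2 + D) := by
        rw [Finset.sum_const, Finset.card_range]
        push_cast
        ring

lemma Bfun_ge (n : ℕ) (w : Fin (n+1) → ℝ) :
    (1 / ((n:ℝ)+1) ^ 2) * (∑ i : Fin (n+1), (w i) ^ 2) ≤ Bfun n w := by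
  have h1 := sum_sq_bound n w
  have hS : 0 ≤ ∑ i : Fin n, (w i.succ - w i.castSucc) ^ 2 :=
    Finset.sum_nonneg fun i _ => sq_nonneg _
  have h2 : (w 0) ^ 2 + ∑ i : Fin n, (w i.succ - w i.castSucc) ^ 2 ≤ Bfun n w := by
    simp only [Bfun]
    nlinarith [sq_nonneg (w 0), sq_nonneg (w (Fin.last n))]
  have hpos : (0:ℝ) < ((n:ℝ)+1) ^ 2 := by positivity
  rw [div_mul_eq_mul_div, one_mul, div_le_iff₀ hpos]
  calc ∑ i : Fin (n+1), (w i) ^ 2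
      ≤ ((n:ℝ)+1) ^ 2 * ((w 0) ^ 2 + ∑ i : Fin n, (w i.succ - w i.castSucc) ^ 2) := h1
    _ ≤ Bfun n w * ((n:ℝ)+1) ^ 2 := by nlinarith

/-- For every `x ∈ ℝⁿ`, `Q(x) - Q(x*) ≥ (1/n²)·‖x - x*‖₂²`, where `x*`
is the unique global minimizer of `Q`. -/
theorem stmt9 (n : ℕ) (ρ : ℝ → ℝ) (ρmax : ℝ) (hρmax : 1 ≤ ρmax)
    (hρdiff : Differentiable ℝ ρ) (hρ : ∀ z, 1 ≤ ρ z ∧ ρ z ≤ ρmax)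
    (xs : EuclideanSpace ℝ (Fin (n + 1)))
    (hmin : ∀ y, Qfun ρ n xs ≤ Qfun ρ n y) :
    ∀ x : EuclideanSpace ℝ (Fin (n + 1)),
      Qfun ρ n x - Qfun ρ n xs ≥ (1 / ((n : ℝ) + 1) ^ 2) * ‖x - xs‖ ^ 2 := by
  intro x
  have hρc : Continuous ρ := hρdiff.continuous
  -- F grows at least like the identity
  have hFd : ∀ a b : ℝ, a ≤ b → b - a ≤ Fint ρ b - Fint ρ a := by
    intro a b hab
    have hsplit : Fint ρ b - Fint ρ a = ∫ z in a..b, ρ z := by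
      have := integral_add_adjacent_intervals (μ := MeasureTheory.volume)
        (hρc.intervalIntegrable 0 a) (hρc.intervalIntegrable a b)
      simp only [Fint]
      linarith [this]
    rw [hsplit]
    have hone : (∫ z in a..b, (1:ℝ)) ≤ ∫ z in a..b, ρ z := by
      apply integral_mono_on hab (intervalIntegrable_const) (hρc.intervalIntegrable a b)
      intro z _
      exact (hρ z).1
    simpa using hone
  have hsq : ∀ a b : ℝ, (b - a) ^ 2 ≤ (Fint ρ b - Fint ρ a) ^ 2 := by
    intro a b
    rcases le_total a b with h | h
    · have := hFd a b h; nlinarith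
    · have := hFd b a h; nlinarith
  -- F is continuous
  have hFcont : Continuous (Fint ρ) := by
    have : ∀ b : ℝ, HasStrictDerivAt (Fint ρ) (ρ b) b := fun b =>
      hρc.integral_hasStrictDerivAt 0 b
    exact continuous_iff_continuousAt.2 fun b =>
      ((this b).hasDerivAt).continuousAt
  -- F is surjective
  have hF0 : Fint ρ 0 = 0 := integral_same
  have hFsurj : Function.Surjective (Fint ρ) := by
    apply hFcont.surjective
    · apply Filter.tendsto_atTop_mono' _ _ Filter.tendsto_id
      filter_upwards [Filter.eventually_ge_atTop (0:ℝ)] with t ht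
      have := hFd 0 t ht
      simp only [hF0] at this
      simpa using this
    · apply Filter.tendsto_atBot_mono' _ _ Filter.tendsto_id
      filter_upwards [Filter.eventually_le_atBot (0:ℝ)] with t ht
      have := hFd t 0 ht
      simp only [hF0] at this
      simpa using by linarith [this]
  set c := Fint ρ 1 with hc
  set g : Fin (n+1) → ℝ := fun i => Fint ρ (x i) with hg
  set gs : Fin (n+1) → ℝ := fun i => Fint ρ (xs i) with hgs
  set w : Fin (n+1) → ℝ := fun i => g i - gs i with hwdef
  have hQx : Qfun ρ n x = Efun c n g := rfl
  have hQxs : Qfun ρ n xs = Efun c n gs := rfl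
  -- minimality in F-coordinates
  have hLzero : Lfun c n gs w = 0 := by
    apply key_quad _ (Bfun n w)
    intro t
    obtain ⟨y, hy⟩ : ∃ y : Fin (n+1) → ℝ, ∀ i, Fint ρ (y i) = gs i + t * w i := by
      refine ⟨fun i => (hFsurj (gs i + t * w i)).choose, fun i =>
        (hFsurj (gs i + t * w i)).choose_spec⟩
    have hEy : Qfun ρ n (WithLp.toLp 2 y)
        = Efun c n (fun i => gs i + t * w i) := by
      have : (fun i => Fint ρ (y i)) = fun i => gs i + t * w i := funext hy
      show Efun c n (fun i => Fint ρ (y i)) = _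
      rw [this]
    have h1 := hmin (WithLp.toLp 2 y)
    rw [hEy, hQxs, Efun_expand] at h1
    linarith
  have hdiff : Qfun ρ n x - Qfun ρ n xs = Bfun n w := by
    have hgw : (fun i => gs i + (1:ℝ) * w i) = g := by
      funext i
      simp [hwdef]
    have := Efun_expand c n gs w 1
    rw [hgw, hLzero] at this
    rw [hQx, hQxs, this]
    ring
  -- norm computation
  have hnorm : ‖x - xs‖ ^ 2 = ∑ i : Fin (n+1), (x i - xs i) ^ 2 := by
    rw [EuclideanSpace.norm_eq, Real.sq_sqrt (Finset.sum_nonneg fun i _ => sq_nonneg _)]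
    refine Finset.sum_congr rfl fun i _ => ?_
    have : (x - xs) i = x i - xs i := rfl
    rw [this, Real.norm_eq_abs, sq_abs]
  have hwle : ∑ i : Fin (n+1), (x i - xs i) ^ 2 ≤ ∑ i : Fin (n+1), (w i) ^ 2 :=
    Finset.sum_le_sum fun i _ => hsq (xs i) (x i)
  have hB := Bfun_ge n w
  rw [ge_iff_le, hdiff, hnorm]
  have hpos : (0:ℝ) ≤ 1 / ((n:ℝ)+1) ^ 2 := by positivity
  calc (1 / ((n:ℝ)+1) ^ 2) * ∑ i : Fin (n+1), (x i - xs i) ^ 2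
      ≤ (1 / ((n:ℝ)+1) ^ 2) * ∑ i : Fin (n+1), (w i) ^ 2 :=
        mul_le_mul_of_nonneg_left hwle hpos
    _ ≤ Bfun n w := hB
end

section
/- Assume in addition that ρ is continuously differentiable and let ‖ρ'‖_∞ = sup_{z ∈ [0,1]} |ρ'(z)|. Then for every x ∈ ℝⁿ with 0 ≤ x₁ ≤ x₂ ≤ ⋯ ≤ xₙ ≤ 1 and every v ∈ ℝⁿ, the Hessian Q''(x) of Q at x satisfies |vᵀ Q''(x) v| ≤ (8ρ_max² + 4‖ρ'‖_∞ ρ_max)·‖v‖₂²; i.e., every eigenvalue of Q''(x) has magnitude at most 8ρ_max² + 4‖ρ'‖_∞ ρ_max. -/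
open intervalIntegral

lemma hasDerivAt_Fint {ρ : ℝ → ℝ} (hc : Continuous ρ) (t : ℝ) :
    HasDerivAt (Fint ρ) (ρ t) t :=
  intervalIntegral.integral_hasDerivAt_right (hc.intervalIntegrable _ _)
    (hc.stronglyMeasurableAtFilter _ _) hc.continuousAt

lemma hasFDerivAt_coord {n : ℕ} {ρ : ℝ → ℝ} (hc : Continuous ρ)
    (x : EuclideanSpace ℝ (Fin (n + 1))) (i : Fin (n + 1)) :
    HasFDerivAt (fun y : EuclideanSpace ℝ (Fin (n + 1)) => Fint ρ (y i))
      (ρ (x i) • (EuclideanSpace.proj i : EuclideanSpace ℝ (Fin (n + 1)) →L[ℝ] ℝ)) x := by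
  have := (hasDerivAt_Fint hc (x i)).comp_hasFDerivAt x
    ((EuclideanSpace.proj i : EuclideanSpace ℝ (Fin (n + 1)) →L[ℝ] ℝ).hasFDerivAt (x := x))
  exact this

noncomputable def Dmap (ρ : ℝ → ℝ) (n : ℕ) (x : EuclideanSpace ℝ (Fin (n + 1))) :
    EuclideanSpace ℝ (Fin (n + 1)) →L[ℝ] ℝ :=
  (4 * Fint ρ (x 0) * ρ (x 0)) • (EuclideanSpace.proj 0 : EuclideanSpace ℝ (Fin (n+1)) →L[ℝ] ℝ)
  + ∑ i : Fin n,
      ((2 * (Fint ρ (x i.succ) - Fint ρ (x i.castSucc)) * ρ (x i.succ)) •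
          (EuclideanSpace.proj i.succ : EuclideanSpace ℝ (Fin (n+1)) →L[ℝ] ℝ)
        - (2 * (Fint ρ (x i.succ) - Fint ρ (x i.castSucc)) * ρ (x i.castSucc)) •
          (EuclideanSpace.proj i.castSucc : EuclideanSpace ℝ (Fin (n+1)) →L[ℝ] ℝ))
  - (4 * (Fint ρ 1 - Fint ρ (x (Fin.last n))) * ρ (x (Fin.last n))) •
      (EuclideanSpace.proj (Fin.last n) : EuclideanSpace ℝ (Fin (n+1)) →L[ℝ] ℝ)

lemma hasFDerivAt_Qfun {n : ℕ} {ρ : ℝ → ℝ} (hc : Continuous ρ)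
    (x : EuclideanSpace ℝ (Fin (n + 1))) :
    HasFDerivAt (Qfun ρ n) (Dmap ρ n x) x := by
  have h0 := hasFDerivAt_coord (n := n) hc x
  have h1 : HasFDerivAt (fun y : EuclideanSpace ℝ (Fin (n+1)) => 2 * (Fint ρ (y 0)) ^ 2)
      ((2:ℝ) • ((2 * Fint ρ (x 0) ^ 1) • (ρ (x 0) •
        (EuclideanSpace.proj 0 : EuclideanSpace ℝ (Fin (n+1)) →L[ℝ] ℝ)))) x :=
    by
      have := (((hasDerivAt_pow 2 (Fint ρ (x 0))).comp_hasFDerivAt x (h0 0)).const_mul 2)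
      exact this
  have h2 : HasFDerivAt
      (fun y : EuclideanSpace ℝ (Fin (n+1)) =>
        ∑ i : Fin n, (Fint ρ (y i.succ) - Fint ρ (y i.castSucc)) ^ 2)
      (∑ i : Fin n, (2 * (Fint ρ (x i.succ) - Fint ρ (x i.castSucc)) ^ 1) •
          (ρ (x i.succ) • (EuclideanSpace.proj i.succ : EuclideanSpace ℝ (Fin (n+1)) →L[ℝ] ℝ)
            - ρ (x i.castSucc) •
              (EuclideanSpace.proj i.castSucc : EuclideanSpace ℝ (Fin (n+1)) →L[ℝ] ℝ))) x :=
    HasFDerivAt.fun_sum fun i _ =>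
      (hasDerivAt_pow 2 _).comp_hasFDerivAt x ((h0 i.succ).sub (h0 i.castSucc))
  have h3 : HasFDerivAt
      (fun y : EuclideanSpace ℝ (Fin (n+1)) => 2 * (Fint ρ 1 - Fint ρ (y (Fin.last n))) ^ 2)
      ((2:ℝ) • ((2 * (Fint ρ 1 - Fint ρ (x (Fin.last n))) ^ 1) •
        ((0 : EuclideanSpace ℝ (Fin (n+1)) →L[ℝ] ℝ) - ρ (x (Fin.last n)) •
          (EuclideanSpace.proj (Fin.last n) : EuclideanSpace ℝ (Fin (n+1)) →L[ℝ] ℝ)))) x :=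
    (((hasDerivAt_pow 2 _).comp_hasFDerivAt x
      ((hasFDerivAt_const (Fint ρ 1) x).sub (h0 (Fin.last n)))).const_mul 2)
  have h := (h1.add h2).add h3
  refine h.congr_fderiv ?_
  symm
  ext y
  simp only [Dmap, ContinuousLinearMap.add_apply, ContinuousLinearMap.sub_apply,
    ContinuousLinearMap.smul_apply, ContinuousLinearMap.coe_sum', Finset.sum_apply,
    ContinuousLinearMap.zero_apply, ContinuousLinearMap.neg_apply, smul_eq_mul, pow_one, smul_sub,
    PiLp.proj_apply, sub_eq_add_neg]
  congr 1
  congr 1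
  · ring
  · exact Finset.sum_congr rfl fun i _ => by ring
  · ring

lemma hasFDerivAt_rho_coord {n : ℕ} {ρ : ℝ → ℝ} (hρdiff : ContDiff ℝ 1 ρ)
    (x : EuclideanSpace ℝ (Fin (n + 1))) (i : Fin (n + 1)) :
    HasFDerivAt (fun y : EuclideanSpace ℝ (Fin (n + 1)) => ρ (y i))
      (deriv ρ (x i) • (EuclideanSpace.proj i : EuclideanSpace ℝ (Fin (n + 1)) →L[ℝ] ℝ)) x := by
  have := (((hρdiff.differentiable one_ne_zero) (x i)).hasDerivAt).comp_hasFDerivAt x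
    ((EuclideanSpace.proj i : EuclideanSpace ℝ (Fin (n + 1)) →L[ℝ] ℝ).hasFDerivAt (x := x))
  exact this

lemma second_deriv_Qfun {n : ℕ} {ρ : ℝ → ℝ} (hρdiff : ContDiff ℝ 1 ρ)
    (x v : EuclideanSpace ℝ (Fin (n + 1))) :
    iteratedFDeriv ℝ 2 (Qfun ρ n) x ![v, v] =
      4 * (ρ (x 0) ^ 2 + Fint ρ (x 0) * deriv ρ (x 0)) * (v 0) ^ 2
      + ∑ i : Fin n,
          (2 * (ρ (x i.succ) * v i.succ - ρ (x i.castSucc) * v i.castSucc) ^ 2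
            + 2 * (Fint ρ (x i.succ) - Fint ρ (x i.castSucc)) *
                (deriv ρ (x i.succ) * (v i.succ) ^ 2
                  - deriv ρ (x i.castSucc) * (v i.castSucc) ^ 2))
      + 4 * ρ (x (Fin.last n)) ^ 2 * (v (Fin.last n)) ^ 2
      - 4 * (Fint ρ 1 - Fint ρ (x (Fin.last n))) * deriv ρ (x (Fin.last n)) *
          (v (Fin.last n)) ^ 2 := by
  have hc : Continuous ρ := hρdiff.continuous
  have h0 := hasFDerivAt_coord (n := n) hc x
  have hr := hasFDerivAt_rho_coord (n := n) hρdiff x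
  have hs0 : HasFDerivAt
      (fun y : EuclideanSpace ℝ (Fin (n+1)) => 4 * Fint ρ (y 0) * ρ (y 0)) _ x :=
    ((h0 0).const_mul 4).mul (hr 0)
  have ha : ∀ i : Fin n, HasFDerivAt
      (fun y : EuclideanSpace ℝ (Fin (n+1)) =>
        2 * (Fint ρ (y i.succ) - Fint ρ (y i.castSucc)) * ρ (y i.succ)) _ x :=
    fun i => (((h0 i.succ).sub (h0 i.castSucc)).const_mul 2).mul (hr i.succ)
  have hb : ∀ i : Fin n, HasFDerivAt
      (fun y : EuclideanSpace ℝ (Fin (n+1)) =>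
        2 * (Fint ρ (y i.succ) - Fint ρ (y i.castSucc)) * ρ (y i.castSucc)) _ x :=
    fun i => (((h0 i.succ).sub (h0 i.castSucc)).const_mul 2).mul (hr i.castSucc)
  have hsn : HasFDerivAt
      (fun y : EuclideanSpace ℝ (Fin (n+1)) =>
        4 * (Fint ρ 1 - Fint ρ (y (Fin.last n))) * ρ (y (Fin.last n))) _ x :=
    (((hasFDerivAt_const (Fint ρ 1) x).sub (h0 (Fin.last n))).const_mul 4).mul (hr (Fin.last n))
  have hD : HasFDerivAt (Dmap ρ n) _ x :=
    ((hs0.smul_const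
        (EuclideanSpace.proj 0 : EuclideanSpace ℝ (Fin (n+1)) →L[ℝ] ℝ)).add
      (HasFDerivAt.fun_sum fun i _ =>
        ((ha i).smul_const
            (EuclideanSpace.proj i.succ : EuclideanSpace ℝ (Fin (n+1)) →L[ℝ] ℝ)).sub
          ((hb i).smul_const
            (EuclideanSpace.proj i.castSucc : EuclideanSpace ℝ (Fin (n+1)) →L[ℝ] ℝ)))).sub
      (hsn.smul_const
        (EuclideanSpace.proj (Fin.last n) : EuclideanSpace ℝ (Fin (n+1)) →L[ℝ] ℝ))
  rw [iteratedFDeriv_two_apply]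
  rw [show fderiv ℝ (Qfun ρ n) = Dmap ρ n from funext fun y => (hasFDerivAt_Qfun hc y).fderiv]
  rw [hD.fderiv]
  simp only [Matrix.cons_val_zero, Matrix.cons_val_one, Matrix.head_cons,
    ContinuousLinearMap.add_apply, ContinuousLinearMap.sub_apply,
    ContinuousLinearMap.smul_apply, ContinuousLinearMap.coe_sum', Finset.sum_apply,
    ContinuousLinearMap.smulRight_apply, ContinuousLinearMap.zero_apply,
    ContinuousLinearMap.neg_apply, smul_eq_mul, pow_one, smul_sub, PiLp.proj_apply,
    sub_eq_add_neg, Pi.sub_apply]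
  ring_nf
  have hs : (∑ i : Fin n,
      (Fint ρ (x i.succ) * deriv ρ (x i.succ) * v i.succ ^ 2 * 2 -
          Fint ρ (x i.succ) * v i.castSucc ^ 2 * deriv ρ (x i.castSucc) * 2 -
            Fint ρ (x i.castSucc) * deriv ρ (x i.succ) * v i.succ ^ 2 * 2 +
        Fint ρ (x i.castSucc) * v i.castSucc ^ 2 * deriv ρ (x i.castSucc) * 2 -
          v i.succ * ρ (x i.succ) * ρ (x i.castSucc) * v i.castSucc * 4 +
        v i.succ ^ 2 * ρ (x i.succ) ^ 2 * 2 +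
        ρ (x i.castSucc) ^ 2 * v i.castSucc ^ 2 * 2)) =
      (∑ i : Fin n,
        (-(ρ (x i.succ) * v i.succ * ρ (x i.castSucc) * v i.castSucc * 4) +
          ρ (x i.succ) ^ 2 * v i.succ ^ 2 * 2 +
          v i.succ ^ 2 * Fint ρ (x i.succ) * deriv ρ (x i.succ) * 2 -
          v i.succ ^ 2 * Fint ρ (x i.castSucc) * deriv ρ (x i.succ) * 2 +
          ρ (x i.castSucc) ^ 2 * v i.castSucc ^ 2 * 2 -
          v i.castSucc ^ 2 * Fint ρ (x i.succ) * deriv ρ (x i.castSucc) * 2 +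
          v i.castSucc ^ 2 * Fint ρ (x i.castSucc) * deriv ρ (x i.castSucc) * 2)) :=
    Finset.sum_congr rfl fun i _ => by ring
  linarith [hs]

lemma coef_sum_le {n : ℕ} (F : Fin (n+1) → ℝ) (F1 ρmax : ℝ) (c : Fin (n+1) → ℝ)
    (hc : ∀ k, 0 ≤ c k) (h0 : ∀ k, 0 ≤ F k) (h1 : ∀ k, F k ≤ F1) (hF1 : F1 ≤ ρmax) :
    4 * F 0 * c 0
      + (∑ i : Fin n, 2 * (F i.succ - F i.castSucc) * (c i.castSucc + c i.succ))
      + 4 * (F1 - F (Fin.last n)) * c (Fin.last n)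
    ≤ 4 * ρmax * ∑ k, c k := by
  classical
  set A : Fin (n+1) → ℝ := fun k =>
    if h : (k : ℕ) < n then F ((⟨(k : ℕ), h⟩ : Fin n).succ) - F k else 0 with hA
  set B : Fin (n+1) → ℝ := fun k =>
    if h : 0 < (k : ℕ) then
      F k - F (⟨(k : ℕ) - 1, lt_of_le_of_lt (Nat.sub_le _ _) k.isLt⟩ : Fin (n+1))
    else 0 with hB
  have hAcast : ∀ i : Fin n, A i.castSucc = F i.succ - F i.castSucc := by
    intro i
    have h : ((i.castSucc : Fin (n+1)) : ℕ) < n := by simpa using i.isLt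
    have h2 : (⟨((i.castSucc : Fin (n+1)) : ℕ), h⟩ : Fin n) = i := by ext; simp
    simp only [hA, dif_pos h, h2]
  have hAlast : A (Fin.last n) = 0 := by simp [hA]
  have hAle : ∀ k, A k ≤ F1 - F k := by
    intro k
    by_cases h : (k : ℕ) < n
    · simp only [hA, dif_pos h]
      have := h1 ((⟨(k : ℕ), h⟩ : Fin n).succ)
      linarith
    · simp only [hA, dif_neg h]
      linarith [h1 k]
  have hBsucc : ∀ i : Fin n, B i.succ = F i.succ - F i.castSucc := by
    intro i
    have h : 0 < ((i.succ : Fin (n+1)) : ℕ) := by simp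
    have h2 : (⟨((i.succ : Fin (n+1)) : ℕ) - 1,
        lt_of_le_of_lt (Nat.sub_le _ _) (i.succ : Fin (n+1)).isLt⟩ : Fin (n+1)) = i.castSucc := by
      ext; simp
    simp only [hB, dif_pos h, h2]
  have hB0 : B 0 = 0 := by simp [hB]
  have hBle : ∀ k, B k ≤ F k := by
    intro k
    by_cases h : 0 < (k : ℕ)
    · simp only [hB, dif_pos h]
      linarith [h0 (⟨(k : ℕ) - 1, lt_of_le_of_lt (Nat.sub_le _ _) k.isLt⟩ : Fin (n+1))]
    · simp only [hB, dif_neg h]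
      exact h0 k
  have hρ0 : 0 ≤ ρmax := le_trans (le_trans (h0 0) (h1 0)) hF1
  have ebound : ∀ k : Fin (n+1),
      2 * A k + 2 * B k + (if k = 0 then 4 * F 0 else 0)
        + (if k = Fin.last n then 4 * (F1 - F (Fin.last n)) else 0) ≤ 4 * ρmax := by
    intro k
    have hA1 := hAle k
    have hB1 := hBle k
    have hF0 := h0 k
    have hFk1 := h1 k
    have hFl0 := h0 (Fin.last n)
    have hFl1 := h1 (Fin.last n)
    split_ifs with hk0 hkl hkl
    · have hBk : B k = 0 := by rw [hk0]; exact hB0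
      have hAk : A k = 0 := by rw [hkl]; exact hAlast
      have h00 : F (Fin.last n) = F 0 := by rw [← hkl, hk0]
      rw [hAk, hBk]
      have hF00 : F k = F 0 := by rw [hk0]
      linarith
    · have hBk : B k = 0 := by rw [hk0]; exact hB0
      have hF00 : F k = F 0 := by rw [hk0]
      rw [hBk]
      linarith
    · have hAk : A k = 0 := by rw [hkl]; exact hAlast
      have hF00 : F k = F (Fin.last n) := by rw [hkl]
      rw [hAk]
      linarith
    · linarith
  have key : 4 * F 0 * c 0
      + (∑ i : Fin n, 2 * (F i.succ - F i.castSucc) * (c i.castSucc + c i.succ))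
      + 4 * (F1 - F (Fin.last n)) * c (Fin.last n)
      = ∑ k, (2 * A k + 2 * B k + (if k = 0 then 4 * F 0 else 0)
          + (if k = Fin.last n then 4 * (F1 - F (Fin.last n)) else 0)) * c k := by
    have e1 : (∑ k, 2 * A k * c k)
        = ∑ i : Fin n, 2 * (F i.succ - F i.castSucc) * c i.castSucc := by
      rw [Fin.sum_univ_castSucc (f := fun k => 2 * A k * c k)]
      rw [hAlast]
      simp only [mul_zero, zero_mul, mul_assoc]
      rw [add_zero]
      exact Finset.sum_congr rfl fun i _ => by rw [hAcast i]
    have e2 : (∑ k, 2 * B k * c k)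
        = ∑ i : Fin n, 2 * (F i.succ - F i.castSucc) * c i.succ := by
      rw [Fin.sum_univ_succ (f := fun k => 2 * B k * c k)]
      rw [hB0]
      simp only [mul_zero, zero_mul]
      rw [zero_add]
      exact Finset.sum_congr rfl fun i _ => by rw [hBsucc i]
    have e3 : (∑ k, (if k = 0 then 4 * F 0 else 0) * c k) = 4 * F 0 * c 0 := by
      rw [Finset.sum_congr rfl (fun k _ => ite_mul (k = 0) (4 * F 0) 0 (c k))]
      simp [Finset.sum_ite_eq']
    have e4 : (∑ k, (if k = Fin.last n then 4 * (F1 - F (Fin.last n)) else 0) * c k)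
        = 4 * (F1 - F (Fin.last n)) * c (Fin.last n) := by
      rw [Finset.sum_congr rfl
        (fun k _ => ite_mul (k = Fin.last n) (4 * (F1 - F (Fin.last n))) 0 (c k))]
      simp [Finset.sum_ite_eq']
    have e5 : (∑ k, (2 * A k + 2 * B k + (if k = 0 then 4 * F 0 else 0)
          + (if k = Fin.last n then 4 * (F1 - F (Fin.last n)) else 0)) * c k)
        = (∑ k, 2 * A k * c k) + (∑ k, 2 * B k * c k)
        + (∑ k, (if k = 0 then 4 * F 0 else 0) * c k)
        + (∑ k, (if k = Fin.last n then 4 * (F1 - F (Fin.last n)) else 0) * c k) := by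
      rw [← Finset.sum_add_distrib, ← Finset.sum_add_distrib, ← Finset.sum_add_distrib]
      exact Finset.sum_congr rfl fun k _ => by ring
    have e6 : (∑ i : Fin n, 2 * (F i.succ - F i.castSucc) * (c i.castSucc + c i.succ))
        = (∑ i : Fin n, 2 * (F i.succ - F i.castSucc) * c i.castSucc)
          + ∑ i : Fin n, 2 * (F i.succ - F i.castSucc) * c i.succ := by
      rw [← Finset.sum_add_distrib]
      exact Finset.sum_congr rfl fun i _ => by ring
    rw [e5, e1, e2, e3, e4, e6]
    ring
  rw [key]
  calc (∑ k, (2 * A k + 2 * B k + (if k = 0 then 4 * F 0 else 0)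
          + (if k = Fin.last n then 4 * (F1 - F (Fin.last n)) else 0)) * c k)
      ≤ ∑ k, 4 * ρmax * c k :=
        Finset.sum_le_sum fun k _ => mul_le_mul_of_nonneg_right (ebound k) (hc k)
    _ = 4 * ρmax * ∑ k, c k := by rw [Finset.mul_sum]

set_option maxHeartbeats 2000000 in
/-- If `ρ` is continuously differentiable and
`K = ‖ρ'‖_∞ = sup_{z ∈ [0,1]} |ρ'(z)|`, then for every monotone configuration
`x ∈ [0,1]ⁿ` and every `v ∈ ℝⁿ`, the Hessian of `Q` at `x` satisfies
`|vᵀ Q''(x) v| ≤ (8ρ_max² + 4‖ρ'‖_∞ ρ_max)·‖v‖₂²`. -/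
theorem stmt10 (n : ℕ) (ρ : ℝ → ℝ) (ρmax : ℝ) (hρmax : 1 ≤ ρmax)
    (hρdiff : ContDiff ℝ 1 ρ) (hρ : ∀ z, 1 ≤ ρ z ∧ ρ z ≤ ρmax)
    (K : ℝ) (hK : K = ⨆ z : Set.Icc (0 : ℝ) 1, |deriv ρ (z : ℝ)|) :
    ∀ x : EuclideanSpace ℝ (Fin (n + 1)),
      (∀ i, x i ∈ Set.Icc (0 : ℝ) 1) → (∀ i j : Fin (n + 1), i ≤ j → x i ≤ x j) →
      ∀ v : EuclideanSpace ℝ (Fin (n + 1)),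
        |iteratedFDeriv ℝ 2 (Qfun ρ n) x ![v, v]|
          ≤ (8 * ρmax ^ 2 + 4 * K * ρmax) * ‖v‖ ^ 2 := by
  have hc : Continuous ρ := hρdiff.continuous
  have hFmono : ∀ s t : ℝ, s ≤ t → Fint ρ s ≤ Fint ρ t := by
    intro s t hst
    have hsub : Fint ρ t - Fint ρ s = ∫ z in s..t, ρ z := by
      unfold Fint
      rw [intervalIntegral.integral_interval_sub_left (hc.intervalIntegrable _ _)
        (hc.intervalIntegrable _ _)]
    have hnn : 0 ≤ ∫ z in s..t, ρ z :=
      intervalIntegral.integral_nonneg hst fun u _ => le_trans zero_le_one (hρ u).1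
    linarith
  have hF00 : Fint ρ 0 = 0 := intervalIntegral.integral_same
  have hF1ρ : Fint ρ 1 ≤ ρmax := by
    have h1 : Fint ρ 1 ≤ ∫ _ in (0:ℝ)..1, ρmax :=
      intervalIntegral.integral_mono_on zero_le_one (hc.intervalIntegrable _ _)
        (intervalIntegrable_const) fun u _ => (hρ u).2
    simpa using h1
  have hdc : Continuous (deriv ρ) := hρdiff.continuous_deriv le_rfl
  have hbdd : BddAbove (Set.range fun z : Set.Icc (0:ℝ) 1 => |deriv ρ (z:ℝ)|) := by
    have hrange : (Set.range fun z : Set.Icc (0:ℝ) 1 => |deriv ρ (z:ℝ)|)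
        = (fun t => |deriv ρ t|) '' Set.Icc 0 1 := by
      ext y
      constructor
      · rintro ⟨⟨t, ht⟩, rfl⟩; exact ⟨t, ht, rfl⟩
      · rintro ⟨t, ht, rfl⟩; exact ⟨⟨t, ht⟩, rfl⟩
    rw [hrange]
    exact (isCompact_Icc.image hdc.abs).bddAbove
  have hKb : ∀ t, t ∈ Set.Icc (0:ℝ) 1 → |deriv ρ t| ≤ K := by
    intro t ht
    rw [hK]
    exact le_ciSup hbdd ⟨t, ht⟩
  have hK0 : 0 ≤ K := le_trans (abs_nonneg _) (hKb 0 ⟨le_rfl, zero_le_one⟩)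
  intro x hx hmono v
  rw [second_deriv_Qfun hρdiff x v]
  set S : ℝ := ∑ k : Fin (n+1), (v k) ^ 2 with hS
  have hnorm : ‖v‖ ^ 2 = S := by
    rw [EuclideanSpace.norm_eq, Real.sq_sqrt (by positivity)]
    exact Finset.sum_congr rfl fun k _ => by rw [Real.norm_eq_abs, sq_abs]
  have hFnn : ∀ k, 0 ≤ Fint ρ (x k) := by
    intro k
    have := hFmono 0 (x k) (hx k).1
    linarith [hF00 ▸ this]
  have hFle1 : ∀ k, Fint ρ (x k) ≤ Fint ρ 1 := fun k => hFmono _ _ (hx k).2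
  have hρsq : ∀ k, (ρ (x k)) ^ 2 ≤ ρmax ^ 2 := by
    intro k
    nlinarith [(hρ (x k)).1, (hρ (x k)).2]
  have hdK : ∀ k, |deriv ρ (x k)| ≤ K := fun k => hKb _ (hx k)
  have hΔ : ∀ i : Fin n, 0 ≤ Fint ρ (x i.succ) - Fint ρ (x i.castSucc) := fun i =>
    sub_nonneg.2 (hFmono _ _ (hmono _ _ (Fin.castSucc_lt_succ (i := i)).le))
  -- split the Hessian into the quadratic part P and the ρ'-part R
  set P : ℝ := 4 * ρ (x 0) ^ 2 * (v 0) ^ 2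
      + (∑ i : Fin n, 2 * (ρ (x i.succ) * v i.succ - ρ (x i.castSucc) * v i.castSucc) ^ 2)
      + 4 * ρ (x (Fin.last n)) ^ 2 * (v (Fin.last n)) ^ 2 with hPdef
  set R : ℝ := 4 * Fint ρ (x 0) * deriv ρ (x 0) * (v 0) ^ 2
      + (∑ i : Fin n, 2 * (Fint ρ (x i.succ) - Fint ρ (x i.castSucc)) *
          (deriv ρ (x i.succ) * (v i.succ) ^ 2 - deriv ρ (x i.castSucc) * (v i.castSucc) ^ 2))
      - 4 * (Fint ρ 1 - Fint ρ (x (Fin.last n))) * deriv ρ (x (Fin.last n)) *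
          (v (Fin.last n)) ^ 2 with hRdef
  have hHPR :
      4 * (ρ (x 0) ^ 2 + Fint ρ (x 0) * deriv ρ (x 0)) * (v 0) ^ 2
      + (∑ i : Fin n,
          (2 * (ρ (x i.succ) * v i.succ - ρ (x i.castSucc) * v i.castSucc) ^ 2
            + 2 * (Fint ρ (x i.succ) - Fint ρ (x i.castSucc)) *
                (deriv ρ (x i.succ) * (v i.succ) ^ 2
                  - deriv ρ (x i.castSucc) * (v i.castSucc) ^ 2)))
      + 4 * ρ (x (Fin.last n)) ^ 2 * (v (Fin.last n)) ^ 2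
      - 4 * (Fint ρ 1 - Fint ρ (x (Fin.last n))) * deriv ρ (x (Fin.last n)) *
          (v (Fin.last n)) ^ 2 = P + R := by
    rw [hPdef, hRdef, Finset.sum_add_distrib]
    ring
  rw [hHPR]
  have hPnn : 0 ≤ P := by
    rw [hPdef]
    have : 0 ≤ ∑ i : Fin n,
        2 * (ρ (x i.succ) * v i.succ - ρ (x i.castSucc) * v i.castSucc) ^ 2 :=
      Finset.sum_nonneg fun i _ => by positivity
    positivity
  have ecast : ∑ i : Fin n, (v i.castSucc) ^ 2 = S - (v (Fin.last n)) ^ 2 := by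
    rw [hS, Fin.sum_univ_castSucc (f := fun k => (v k) ^ 2)]
    ring
  have esucc : ∑ i : Fin n, (v i.succ) ^ 2 = S - (v 0) ^ 2 := by
    rw [hS, Fin.sum_univ_succ (f := fun k => (v k) ^ 2)]
    ring
  have hP : P ≤ 8 * ρmax ^ 2 * S := by
    have hp1 : ∀ i : Fin n,
        2 * (ρ (x i.succ) * v i.succ - ρ (x i.castSucc) * v i.castSucc) ^ 2
          ≤ 4 * ρmax ^ 2 * ((v i.castSucc) ^ 2 + (v i.succ) ^ 2) := by
      intro i
      nlinarith [mul_le_mul_of_nonneg_right (hρsq i.succ) (sq_nonneg (v i.succ)),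
        mul_le_mul_of_nonneg_right (hρsq i.castSucc) (sq_nonneg (v i.castSucc)),
        sq_nonneg (ρ (x i.succ) * v i.succ + ρ (x i.castSucc) * v i.castSucc)]
    have hsum1 : (∑ i : Fin n,
          2 * (ρ (x i.succ) * v i.succ - ρ (x i.castSucc) * v i.castSucc) ^ 2)
        ≤ ∑ i : Fin n, 4 * ρmax ^ 2 * ((v i.castSucc) ^ 2 + (v i.succ) ^ 2) :=
      Finset.sum_le_sum fun i _ => hp1 i
    have hsum2 : (∑ i : Fin n, 4 * ρmax ^ 2 * ((v i.castSucc) ^ 2 + (v i.succ) ^ 2))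
        = 4 * ρmax ^ 2 * (2 * S - (v 0) ^ 2 - (v (Fin.last n)) ^ 2) := by
      rw [← Finset.mul_sum, Finset.sum_add_distrib, ecast, esucc]
      ring
    have h0b := mul_le_mul_of_nonneg_right (hρsq 0) (sq_nonneg (v 0))
    have hlb := mul_le_mul_of_nonneg_right (hρsq (Fin.last n)) (sq_nonneg (v (Fin.last n)))
    rw [hPdef]
    rw [hsum2] at hsum1
    nlinarith [sq_nonneg (v 0), sq_nonneg (v (Fin.last n))]
  have habs_sub : ∀ a b : ℝ, |a - b| ≤ |a| + |b| := by
    intro a b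
    calc |a - b| = |a + -b| := by ring_nf
      _ ≤ |a| + |-b| := abs_add_le _ _
      _ = |a| + |b| := by rw [abs_neg]
  have hR : |R| ≤ 4 * K * ρmax * S := by
    have hr1 : ∀ i : Fin n,
        |2 * (Fint ρ (x i.succ) - Fint ρ (x i.castSucc)) *
          (deriv ρ (x i.succ) * (v i.succ) ^ 2 - deriv ρ (x i.castSucc) * (v i.castSucc) ^ 2)|
        ≤ K * (2 * (Fint ρ (x i.succ) - Fint ρ (x i.castSucc)) *
            ((v i.castSucc) ^ 2 + (v i.succ) ^ 2)) := by
      intro i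
      rw [abs_mul]
      have h2 : |2 * (Fint ρ (x i.succ) - Fint ρ (x i.castSucc))|
          = 2 * (Fint ρ (x i.succ) - Fint ρ (x i.castSucc)) :=
        abs_of_nonneg (by linarith [hΔ i])
      rw [h2]
      have h3 : |deriv ρ (x i.succ) * (v i.succ) ^ 2
            - deriv ρ (x i.castSucc) * (v i.castSucc) ^ 2|
          ≤ K * ((v i.castSucc) ^ 2 + (v i.succ) ^ 2) := by
        calc |deriv ρ (x i.succ) * (v i.succ) ^ 2
              - deriv ρ (x i.castSucc) * (v i.castSucc) ^ 2|
            ≤ |deriv ρ (x i.succ) * (v i.succ) ^ 2|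
              + |deriv ρ (x i.castSucc) * (v i.castSucc) ^ 2| := habs_sub _ _
          _ = |deriv ρ (x i.succ)| * (v i.succ) ^ 2
              + |deriv ρ (x i.castSucc)| * (v i.castSucc) ^ 2 := by
              rw [abs_mul, abs_mul, abs_of_nonneg (sq_nonneg (v i.succ)),
                abs_of_nonneg (sq_nonneg (v i.castSucc))]
          _ ≤ K * (v i.succ) ^ 2 + K * (v i.castSucc) ^ 2 := by
              have := mul_le_mul_of_nonneg_right (hdK i.succ) (sq_nonneg (v i.succ))
              have := mul_le_mul_of_nonneg_right (hdK i.castSucc) (sq_nonneg (v i.castSucc))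
              linarith
          _ = K * ((v i.castSucc) ^ 2 + (v i.succ) ^ 2) := by ring
      calc 2 * (Fint ρ (x i.succ) - Fint ρ (x i.castSucc)) *
            |deriv ρ (x i.succ) * (v i.succ) ^ 2 - deriv ρ (x i.castSucc) * (v i.castSucc) ^ 2|
          ≤ 2 * (Fint ρ (x i.succ) - Fint ρ (x i.castSucc)) *
            (K * ((v i.castSucc) ^ 2 + (v i.succ) ^ 2)) :=
            mul_le_mul_of_nonneg_left h3 (by linarith [hΔ i])
        _ = K * (2 * (Fint ρ (x i.succ) - Fint ρ (x i.castSucc)) *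
            ((v i.castSucc) ^ 2 + (v i.succ) ^ 2)) := by ring
    have hA' : |4 * Fint ρ (x 0) * deriv ρ (x 0) * (v 0) ^ 2|
        ≤ K * (4 * Fint ρ (x 0) * (v 0) ^ 2) := by
      rw [abs_mul, abs_mul, abs_of_nonneg (by linarith [hFnn 0] : (0:ℝ) ≤ 4 * Fint ρ (x 0)),
        abs_of_nonneg (sq_nonneg (v 0))]
      nlinarith [mul_nonneg (mul_nonneg (sub_nonneg.2 (hdK (0 : Fin (n+1))))
        (by linarith [hFnn 0] : (0:ℝ) ≤ 4 * Fint ρ (x 0))) (sq_nonneg (v 0))]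
    have hC' : |4 * (Fint ρ 1 - Fint ρ (x (Fin.last n))) * deriv ρ (x (Fin.last n)) *
          (v (Fin.last n)) ^ 2|
        ≤ K * (4 * (Fint ρ 1 - Fint ρ (x (Fin.last n))) * (v (Fin.last n)) ^ 2) := by
      rw [abs_mul, abs_mul, abs_of_nonneg
        (by linarith [hFle1 (Fin.last n)] : (0:ℝ) ≤ 4 * (Fint ρ 1 - Fint ρ (x (Fin.last n)))),
        abs_of_nonneg (sq_nonneg (v (Fin.last n)))]
      nlinarith [mul_nonneg (mul_nonneg (sub_nonneg.2 (hdK (Fin.last n)))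
        (by linarith [hFle1 (Fin.last n)] :
          (0:ℝ) ≤ 4 * (Fint ρ 1 - Fint ρ (x (Fin.last n))))) (sq_nonneg (v (Fin.last n)))]
    have hSd : |∑ i : Fin n, 2 * (Fint ρ (x i.succ) - Fint ρ (x i.castSucc)) *
          (deriv ρ (x i.succ) * (v i.succ) ^ 2 - deriv ρ (x i.castSucc) * (v i.castSucc) ^ 2)|
        ≤ K * ∑ i : Fin n, 2 * (Fint ρ (x i.succ) - Fint ρ (x i.castSucc)) *
            ((v i.castSucc) ^ 2 + (v i.succ) ^ 2) := by
      calc |∑ i : Fin n, 2 * (Fint ρ (x i.succ) - Fint ρ (x i.castSucc)) *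
            (deriv ρ (x i.succ) * (v i.succ) ^ 2 - deriv ρ (x i.castSucc) * (v i.castSucc) ^ 2)|
          ≤ ∑ i : Fin n, |2 * (Fint ρ (x i.succ) - Fint ρ (x i.castSucc)) *
            (deriv ρ (x i.succ) * (v i.succ) ^ 2
              - deriv ρ (x i.castSucc) * (v i.castSucc) ^ 2)| :=
            Finset.abs_sum_le_sum_abs _ _
        _ ≤ ∑ i : Fin n, K * (2 * (Fint ρ (x i.succ) - Fint ρ (x i.castSucc)) *
            ((v i.castSucc) ^ 2 + (v i.succ) ^ 2)) := Finset.sum_le_sum fun i _ => hr1 i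
        _ = K * ∑ i : Fin n, 2 * (Fint ρ (x i.succ) - Fint ρ (x i.castSucc)) *
            ((v i.castSucc) ^ 2 + (v i.succ) ^ 2) := by rw [Finset.mul_sum]
    have hcoef := coef_sum_le (fun k => Fint ρ (x k)) (Fint ρ 1) ρmax (fun k => (v k) ^ 2)
      (fun k => sq_nonneg (v k)) hFnn hFle1 hF1ρ
    have hRabs : |R| ≤ |4 * Fint ρ (x 0) * deriv ρ (x 0) * (v 0) ^ 2|
        + |∑ i : Fin n, 2 * (Fint ρ (x i.succ) - Fint ρ (x i.castSucc)) *
          (deriv ρ (x i.succ) * (v i.succ) ^ 2 - deriv ρ (x i.castSucc) * (v i.castSucc) ^ 2)|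
        + |4 * (Fint ρ 1 - Fint ρ (x (Fin.last n))) * deriv ρ (x (Fin.last n)) *
          (v (Fin.last n)) ^ 2| := by
      rw [hRdef]
      calc |4 * Fint ρ (x 0) * deriv ρ (x 0) * (v 0) ^ 2
            + (∑ i : Fin n, 2 * (Fint ρ (x i.succ) - Fint ρ (x i.castSucc)) *
              (deriv ρ (x i.succ) * (v i.succ) ^ 2
                - deriv ρ (x i.castSucc) * (v i.castSucc) ^ 2))
            - 4 * (Fint ρ 1 - Fint ρ (x (Fin.last n))) * deriv ρ (x (Fin.last n)) *
              (v (Fin.last n)) ^ 2|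
          ≤ |4 * Fint ρ (x 0) * deriv ρ (x 0) * (v 0) ^ 2
            + (∑ i : Fin n, 2 * (Fint ρ (x i.succ) - Fint ρ (x i.castSucc)) *
              (deriv ρ (x i.succ) * (v i.succ) ^ 2
                - deriv ρ (x i.castSucc) * (v i.castSucc) ^ 2))|
            + |4 * (Fint ρ 1 - Fint ρ (x (Fin.last n))) * deriv ρ (x (Fin.last n)) *
              (v (Fin.last n)) ^ 2| := habs_sub _ _
        _ ≤ _ := by
            have := abs_add_le (4 * Fint ρ (x 0) * deriv ρ (x 0) * (v 0) ^ 2)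
              (∑ i : Fin n, 2 * (Fint ρ (x i.succ) - Fint ρ (x i.castSucc)) *
                (deriv ρ (x i.succ) * (v i.succ) ^ 2
                  - deriv ρ (x i.castSucc) * (v i.castSucc) ^ 2))
            linarith
    have hmul := mul_le_mul_of_nonneg_left hcoef hK0
    calc |R| ≤ _ := hRabs
      _ ≤ K * (4 * Fint ρ (x 0) * (v 0) ^ 2
          + (∑ i : Fin n, 2 * (Fint ρ (x i.succ) - Fint ρ (x i.castSucc)) *
              ((v i.castSucc) ^ 2 + (v i.succ) ^ 2))
          + 4 * (Fint ρ 1 - Fint ρ (x (Fin.last n))) * (v (Fin.last n)) ^ 2) := by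
          have := hA'
          have := hC'
          have := hSd
          linarith
      _ ≤ K * (4 * ρmax * S) := hmul
      _ = 4 * K * ρmax * S := by ring
  calc |P + R| ≤ |P| + |R| := abs_add_le _ _
    _ = P + |R| := by rw [abs_of_nonneg hPnn]
    _ ≤ 8 * ρmax ^ 2 * S + 4 * K * ρmax * S := by linarith
    _ = (8 * ρmax ^ 2 + 4 * K * ρmax) * ‖v‖ ^ 2 := by rw [hnorm]; ring
end

section
/- Assume in addition that ρ is continuously differentiable and let ‖ρ'‖_∞ = sup_{z ∈ [0,1]} |ρ'(z)|. Then for any two vectors x, x' ∈ ℝⁿ each of which has nondecreasing entries lying in [0,1], one has Q(x') ≤ Q(x) + ⟨∇Q(x), x' − x⟩ + (4ρ_max² + 2‖ρ'‖_∞ ρ_max)·‖x' − x‖₂². -/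
open intervalIntegral RealInnerProductSpace

namespace Stmt11Aux

/-- extend a sequence `w : Fin (n+1) → ℝ` with `a` in front and `b` at the end. -/
def ext3 (n : ℕ) (w : Fin (n + 1) → ℝ) (a b : ℝ) : Fin (n + 3) → ℝ :=
  Fin.cons a (Fin.snoc w b)

/-- edge weights: 2, 1, …, 1, 2. -/
def cw (n : ℕ) : Fin (n + 2) → ℝ :=
  Fin.cons 2 (Fin.snoc (fun _ : Fin n => (1 : ℝ)) 2)

variable {n : ℕ} {w : Fin (n + 1) → ℝ} {a b : ℝ}

@[simp] lemma ext3_zero : ext3 n w a b 0 = a := rfl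

@[simp] lemma ext3_mid (j : Fin (n + 1)) : ext3 n w a b (j.castSucc.succ) = w j := by
  unfold ext3
  rw [Fin.cons_succ, Fin.snoc_castSucc]

@[simp] lemma ext3_last : ext3 n w a b (Fin.last (n + 2)) = b := by
  unfold ext3
  rw [← Fin.succ_last, Fin.cons_succ, Fin.snoc_last]

-- edge endpoint evaluations
@[simp] lemma ext3_e0c : ext3 n w a b ((0 : Fin (n + 2)).castSucc) = a := by
  rw [Fin.castSucc_zero]; rfl

@[simp] lemma ext3_one : ext3 n w a b 1 = w 0 := by
  have h : (1 : Fin (n + 3)) = ((0 : Fin (n + 1)).castSucc).succ := by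
    rw [Fin.castSucc_zero, Fin.succ_zero_eq_one]
  rw [h, ext3_mid]



@[simp] lemma ext3_e0s : ext3 n w a b ((0 : Fin (n + 2)).succ) = w 0 := by
  have : ((0 : Fin (n + 2)).succ) = ((0 : Fin (n+1)).castSucc.succ) := by
    rw [Fin.castSucc_zero]
  rw [this, ext3_mid]

@[simp] lemma ext3_emc (j : Fin n) :
    ext3 n w a b ((j.castSucc.succ).castSucc) = w j.castSucc := by
  have : ((j.castSucc.succ : Fin (n+2)).castSucc) = ((j.castSucc : Fin (n+1)).castSucc.succ) := by
    rw [← Fin.succ_castSucc]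
  rw [this, ext3_mid]

@[simp] lemma ext3_ems (j : Fin n) :
    ext3 n w a b ((j.castSucc.succ).succ) = w j.succ := by
  have : ((j.castSucc.succ : Fin (n+2)).succ) = ((j.succ : Fin (n+1)).castSucc.succ) := by
    rw [Fin.succ_castSucc]
  rw [this, ext3_mid]

@[simp] lemma ext3_elc : ext3 n w a b ((Fin.last (n + 1)).castSucc) = w (Fin.last n) := by
  have : ((Fin.last (n + 1)).castSucc : Fin (n+3)) = ((Fin.last n : Fin (n+1)).castSucc.succ) := by
    rw [← Fin.succ_last, Fin.succ_castSucc]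
  rw [this, ext3_mid]

@[simp] lemma ext3_els : ext3 n w a b ((Fin.last (n + 1)).succ) = b := by
  rw [Fin.succ_last]; exact ext3_last

@[simp] lemma cw_zero : cw n 0 = 2 := rfl

@[simp] lemma cw_mid (j : Fin n) : cw n (j.castSucc.succ) = 1 := by
  unfold cw; rw [Fin.cons_succ, Fin.snoc_castSucc]

@[simp] lemma cw_last : cw n (Fin.last (n + 1)) = 2 := by
  unfold cw; rw [← Fin.succ_last, Fin.cons_succ, Fin.snoc_last]

lemma edge_cases {motive : Fin (n + 2) → Prop} (h0 : motive 0)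
    (hmid : ∀ j : Fin n, motive (j.castSucc.succ)) (hlast : motive (Fin.last (n + 1))) :
    ∀ k, motive k := by
  intro k
  induction k using Fin.cases with
  | zero => exact h0
  | succ i =>
    induction i using Fin.lastCases with
    | last => rw [Fin.succ_last]; exact hlast
    | cast j => exact hmid j

lemma edge_expand (f : Fin (n + 2) → ℝ) :
    ∑ k : Fin (n + 2), f k
      = f 0 + (∑ j : Fin n, f (j.castSucc.succ)) + f (Fin.last (n + 1)) := by
  rw [Fin.sum_univ_succ, Fin.sum_univ_castSucc, ← add_assoc, Fin.succ_last]

lemma node_expand (f : Fin (n + 3) → ℝ) :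
    ∑ m : Fin (n + 3), f m
      = f 0 + (∑ j : Fin (n + 1), f (j.castSucc.succ)) + f (Fin.last (n + 2)) := by
  rw [Fin.sum_univ_succ, Fin.sum_univ_castSucc, ← add_assoc, Fin.succ_last]

/-- Abel-type regrouping for a function vanishing at both ends. -/
lemma abel_regroup (h : Fin (n + 2) → ℝ) (R : Fin (n + 3) → ℝ)
    (hR0 : R 0 = 0) (hRl : R (Fin.last (n + 2)) = 0) :
    ∑ k : Fin (n + 2), h k * (R k.succ - R k.castSucc)
      = ∑ i : Fin (n + 1), (h i.castSucc - h i.succ) * R (i.castSucc.succ) := by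
  have e1 : ∑ k : Fin (n + 2), h k * R k.succ
      = ∑ i : Fin (n + 1), h i.castSucc * R (i.castSucc.succ) := by
    rw [Fin.sum_univ_castSucc (f := fun k : Fin (n+2) => h k * R k.succ),
      Fin.succ_last, hRl]
    simp
  have e2 : ∑ k : Fin (n + 2), h k * R k.castSucc
      = ∑ i : Fin (n + 1), h i.succ * R (i.castSucc.succ) := by
    rw [Fin.sum_univ_succ (f := fun k : Fin (n+2) => h k * R k.castSucc),
      Fin.castSucc_zero, hR0]
    simp only [mul_zero, zero_add]
    exact Finset.sum_congr rfl fun i _ => by rw [← Fin.succ_castSucc]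
  simp only [mul_sub, Finset.sum_sub_distrib, e1, e2, sub_mul]

end Stmt11Aux

namespace Stmt11Aux

lemma node_cases {n : ℕ} {motive : Fin (n + 3) → Prop} (h0 : motive 0)
    (hmid : ∀ j : Fin (n + 1), motive (j.castSucc.succ)) (hlast : motive (Fin.last (n + 2))) :
    ∀ m, motive m := by
  intro m
  induction m using Fin.cases with
  | zero => exact h0
  | succ i =>
    induction i using Fin.lastCases with
    | last => rw [Fin.succ_last]; exact hlast
    | cast j => exact hmid j

lemma sum_succ_eq {n : ℕ} (g : Fin (n + 3) → ℝ) (hgl : g (Fin.last (n + 2)) = 0) :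
    ∑ k : Fin (n + 2), g k.succ = ∑ i : Fin (n + 1), g (i.castSucc.succ) := by
  rw [Fin.sum_univ_castSucc (f := fun k : Fin (n + 2) => g k.succ), Fin.succ_last, hgl, add_zero]

lemma sum_castSucc_eq {n : ℕ} (g : Fin (n + 3) → ℝ) (hg0 : g 0 = 0) :
    ∑ k : Fin (n + 2), g k.castSucc = ∑ i : Fin (n + 1), g (i.castSucc.succ) := by
  rw [Fin.sum_univ_succ (f := fun k : Fin (n + 2) => g k.castSucc), Fin.castSucc_zero, hg0,
    zero_add]
  exact Finset.sum_congr rfl fun i _ => by rw [← Fin.succ_castSucc]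

lemma key (n : ℕ) (u u' p : Fin (n + 1) → ℝ) (F1 A : ℝ) (B V : Fin (n + 1) → ℝ)
    (humono : ∀ i j : Fin (n + 1), i ≤ j → u i ≤ u j)
    (hu0 : 0 ≤ u 0) (hulast : u (Fin.last n) ≤ F1) (hF1A : F1 ≤ A) (hA : 0 ≤ A)
    (hrem : ∀ j, |u' j - u j - p j| ≤ B j)
    (hv : ∀ j, (u' j - u j) ^ 2 ≤ V j) :
    2 * (u' 0) ^ 2 + (∑ i : Fin n, (u' i.succ - u' i.castSucc) ^ 2)
        + 2 * (F1 - u' (Fin.last n)) ^ 2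
      ≤ 2 * (u 0) ^ 2 + (∑ i : Fin n, (u i.succ - u i.castSucc) ^ 2)
          + 2 * (F1 - u (Fin.last n)) ^ 2
        + (4 * u 0 * p 0
            + (∑ i : Fin n, 2 * (u i.succ - u i.castSucc) * (p i.succ - p i.castSucc))
            - 4 * (F1 - u (Fin.last n)) * p (Fin.last n))
        + ((∑ j, 4 * A * B j) + 4 * ∑ j, V j) := by
  set U : Fin (n + 3) → ℝ := ext3 n u 0 F1 with hU
  set U' : Fin (n + 3) → ℝ := ext3 n u' 0 F1 with hU'
  set P : Fin (n + 3) → ℝ := ext3 n p 0 0 with hP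
  set c : Fin (n + 2) → ℝ := cw n with hc
  -- the three edge-sum representations
  have hQ'e : 2 * (u' 0) ^ 2 + (∑ i : Fin n, (u' i.succ - u' i.castSucc) ^ 2)
        + 2 * (F1 - u' (Fin.last n)) ^ 2
      = ∑ k : Fin (n + 2), c k * (U' k.succ - U' k.castSucc) ^ 2 := by
    rw [edge_expand]
    simp only [hU', hc, ext3_e0c, ext3_e0s, ext3_emc, ext3_ems, ext3_elc, ext3_els,
      cw_zero, cw_mid, cw_last, sub_zero, mul_one, one_mul]
  have hQe : 2 * (u 0) ^ 2 + (∑ i : Fin n, (u i.succ - u i.castSucc) ^ 2)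
        + 2 * (F1 - u (Fin.last n)) ^ 2
      = ∑ k : Fin (n + 2), c k * (U k.succ - U k.castSucc) ^ 2 := by
    rw [edge_expand]
    simp only [hU, hc, ext3_e0c, ext3_e0s, ext3_emc, ext3_ems, ext3_elc, ext3_els,
      cw_zero, cw_mid, cw_last, sub_zero, mul_one, one_mul]
  have hLde : 4 * u 0 * p 0
        + (∑ i : Fin n, 2 * (u i.succ - u i.castSucc) * (p i.succ - p i.castSucc))
        - 4 * (F1 - u (Fin.last n)) * p (Fin.last n)
      = ∑ k : Fin (n + 2), 2 * c k * (U k.succ - U k.castSucc) * (P k.succ - P k.castSucc) := by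
    rw [edge_expand]
    simp only [hU, hP, hc, ext3_e0c, ext3_e0s, ext3_emc, ext3_ems, ext3_elc, ext3_els,
      cw_zero, cw_mid, cw_last, sub_zero, mul_one, one_mul]
    ring
  -- facts about U, c
  have hUrange : ∀ m, 0 ≤ U m ∧ U m ≤ F1 := by
    have hF1 : 0 ≤ F1 := le_trans (le_trans hu0 (humono 0 (Fin.last n) (Fin.le_last _))) hulast
    refine node_cases ?_ ?_ ?_
    · simp [hU]; exact hF1
    · intro j
      simp only [hU, ext3_mid]
      exact ⟨le_trans hu0 (humono 0 j (Fin.zero_le _)),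
        le_trans (humono j (Fin.last n) (Fin.le_last _)) hulast⟩
    · simp [hU]; exact hF1
  have hcrange : ∀ k, 0 ≤ c k ∧ c k ≤ 2 := by
    refine edge_cases ?_ ?_ ?_ <;> simp [hc] <;> norm_num
  have headj : ∀ k : Fin (n + 2), 0 ≤ U k.succ - U k.castSucc := by
    refine edge_cases ?_ ?_ ?_
    · simp [hU]; exact hu0
    · intro j
      simp only [hU, ext3_emc, ext3_ems, sub_nonneg]
      exact humono _ _ (Fin.castSucc_le_succ j)
    · simp [hU]; exact hulast
  have heA : ∀ k : Fin (n + 2), U k.succ - U k.castSucc ≤ A :=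
    fun k => le_trans (by linarith [(hUrange k.succ).2, (hUrange k.castSucc).1]) hF1A
  have hh : ∀ k : Fin (n + 2), 0 ≤ 2 * c k * (U k.succ - U k.castSucc)
      ∧ 2 * c k * (U k.succ - U k.castSucc) ≤ 4 * A := by
    intro k
    obtain ⟨hc0, hc2⟩ := hcrange k
    have h1 := headj k
    have h2 := heA k
    constructor
    · positivity
    · nlinarith
  -- zero endpoints
  have hV0 : U' 0 - U 0 = 0 := by simp [hU, hU']
  have hVl : U' (Fin.last (n + 2)) - U (Fin.last (n + 2)) = 0 := by simp [hU, hU']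
  have hR0 : (U' 0 - U 0) - P 0 = 0 := by simp [hU, hU', hP]
  have hRl : (U' (Fin.last (n + 2)) - U (Fin.last (n + 2))) - P (Fin.last (n + 2)) = 0 := by
    simp [hU, hU', hP]
  -- exact second-order expansion
  have hexp : ∑ k : Fin (n + 2), c k * (U' k.succ - U' k.castSucc) ^ 2
      = (∑ k : Fin (n + 2), c k * (U k.succ - U k.castSucc) ^ 2)
        + (∑ k : Fin (n + 2), 2 * c k * (U k.succ - U k.castSucc)
            * (P k.succ - P k.castSucc))
        + (∑ k : Fin (n + 2), (2 * c k * (U k.succ - U k.castSucc))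
            * (((U' k.succ - U k.succ) - P k.succ) - ((U' k.castSucc - U k.castSucc) - P k.castSucc)))
        + (∑ k : Fin (n + 2), c k
            * ((U' k.succ - U k.succ) - (U' k.castSucc - U k.castSucc)) ^ 2) := by
    rw [← Finset.sum_add_distrib, ← Finset.sum_add_distrib, ← Finset.sum_add_distrib]
    exact Finset.sum_congr rfl fun k _ => by ring
  -- Abel bound for the remainder term
  have habel : (∑ k : Fin (n + 2), (2 * c k * (U k.succ - U k.castSucc))
          * (((U' k.succ - U k.succ) - P k.succ) - ((U' k.castSucc - U k.castSucc) - P k.castSucc)))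
      ≤ ∑ j, 4 * A * B j := by
    have := abel_regroup (fun k : Fin (n + 2) => 2 * c k * (U k.succ - U k.castSucc))
      (fun m => (U' m - U m) - P m) hR0 hRl
    rw [this]
    refine Finset.sum_le_sum fun i _ => ?_
    have hRi : (U' (i.castSucc.succ) - U (i.castSucc.succ)) - P (i.castSucc.succ)
        = u' i - u i - p i := by simp [hU, hU', hP]
    rw [hRi]
    have hci : |2 * c i.castSucc * (U i.castSucc.succ - U i.castSucc.castSucc)
        - 2 * c i.succ * (U i.succ.succ - U i.succ.castSucc)| ≤ 4 * A := by
      obtain ⟨ha1, ha2⟩ := hh i.castSucc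
      obtain ⟨hb1, hb2⟩ := hh i.succ
      rw [abs_sub_le_iff]
      constructor <;> linarith
    calc (2 * c i.castSucc * (U i.castSucc.succ - U i.castSucc.castSucc)
          - 2 * c i.succ * (U i.succ.succ - U i.succ.castSucc)) * (u' i - u i - p i)
        ≤ |(2 * c i.castSucc * (U i.castSucc.succ - U i.castSucc.castSucc)
          - 2 * c i.succ * (U i.succ.succ - U i.succ.castSucc)) * (u' i - u i - p i)| :=
          le_abs_self _
      _ = |2 * c i.castSucc * (U i.castSucc.succ - U i.castSucc.castSucc)
          - 2 * c i.succ * (U i.succ.succ - U i.succ.castSucc)| * |u' i - u i - p i| :=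
          abs_mul _ _
      _ ≤ (4 * A) * B i :=
          mul_le_mul hci (hrem i) (abs_nonneg _) (by positivity)
  -- quadratic term bound
  have hquad : (∑ k : Fin (n + 2), c k
        * ((U' k.succ - U k.succ) - (U' k.castSucc - U k.castSucc)) ^ 2)
      ≤ 4 * ∑ j, V j := by
    have step1 : ∀ k : Fin (n + 2), c k
        * ((U' k.succ - U k.succ) - (U' k.castSucc - U k.castSucc)) ^ 2
        ≤ 2 * ((U' k.succ - U k.succ) ^ 2 + (U' k.castSucc - U k.castSucc) ^ 2) := by
      refine edge_cases ?_ ?_ ?_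
      · simp only [hc, cw_zero, hU, hU', ext3_e0c, ext3_e0s]
        nlinarith [sq_nonneg (u' 0 - u 0)]
      · intro j
        simp only [hc, cw_mid, hU, hU', ext3_emc, ext3_ems, one_mul]
        nlinarith [sq_nonneg ((u' j.succ - u j.succ) + (u' j.castSucc - u j.castSucc))]
      · simp only [hc, cw_last, hU, hU', ext3_elc, ext3_els]
        nlinarith [sq_nonneg (u' (Fin.last n) - u (Fin.last n))]
    have hs1 : (∑ k : Fin (n + 2), (U' k.succ - U k.succ) ^ 2)
        = ∑ i : Fin (n + 1), (u' i - u i) ^ 2 := by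
      rw [Fin.sum_univ_castSucc (f := fun k : Fin (n + 2) => (U' k.succ - U k.succ) ^ 2),
        Fin.succ_last, hVl]
      simp only [ne_eq, OfNat.ofNat_ne_zero, not_false_eq_true, zero_pow, add_zero]
      exact Finset.sum_congr rfl fun i _ => by simp [hU, hU', ext3_mid]
    have hs2 : (∑ k : Fin (n + 2), (U' k.castSucc - U k.castSucc) ^ 2)
        = ∑ i : Fin (n + 1), (u' i - u i) ^ 2 := by
      rw [Fin.sum_univ_succ (f := fun k : Fin (n + 2) => (U' k.castSucc - U k.castSucc) ^ 2),
        Fin.castSucc_zero, hV0]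
      simp only [ne_eq, OfNat.ofNat_ne_zero, not_false_eq_true, zero_pow, zero_add]
      exact Finset.sum_congr rfl fun i _ => by
        rw [← Fin.succ_castSucc]; simp [hU, hU', ext3_mid]
    have hsv : (∑ i : Fin (n + 1), (u' i - u i) ^ 2) ≤ ∑ j, V j :=
      Finset.sum_le_sum fun i _ => hv i
    calc (∑ k : Fin (n + 2), c k
          * ((U' k.succ - U k.succ) - (U' k.castSucc - U k.castSucc)) ^ 2)
        ≤ ∑ k : Fin (n + 2),
            2 * ((U' k.succ - U k.succ) ^ 2 + (U' k.castSucc - U k.castSucc) ^ 2) :=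
          Finset.sum_le_sum fun k _ => step1 k
      _ = 2 * ((∑ k : Fin (n + 2), (U' k.succ - U k.succ) ^ 2)
            + ∑ k : Fin (n + 2), (U' k.castSucc - U k.castSucc) ^ 2) := by
          simp only [mul_add, Finset.sum_add_distrib, Finset.mul_sum]
      _ ≤ 4 * ∑ j, V j := by rw [hs1, hs2]; linarith
  -- final assembly
  rw [hQ'e, hQe, hLde, hexp]
  linarith [habel, hquad]

end Stmt11Aux

namespace Stmt11Aux

open intervalIntegral

lemma Fint_hasDerivAt {ρ : ℝ → ℝ} (hc : Continuous ρ) (t : ℝ) :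
    HasDerivAt (Fint ρ) (ρ t) t :=
  intervalIntegral.integral_hasDerivAt_right (hc.intervalIntegrable _ _)
    (hc.stronglyMeasurableAtFilter _ _) hc.continuousAt

lemma Fint_sub {ρ : ℝ → ℝ} (hc : Continuous ρ) (a b : ℝ) :
    Fint ρ b - Fint ρ a = ∫ z in a..b, ρ z :=
  intervalIntegral.integral_interval_sub_left (hc.intervalIntegrable _ _)
    (hc.intervalIntegrable _ _)

lemma Fint_mono {ρ : ℝ → ℝ} (hc : Continuous ρ) (h1 : ∀ z, 1 ≤ ρ z) {a b : ℝ} (hab : a ≤ b) :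
    Fint ρ a ≤ Fint ρ b := by
  have h := intervalIntegral.integral_nonneg (f := ρ) (μ := MeasureTheory.volume) hab
    (fun u _ => le_trans zero_le_one (h1 u))
  have := Fint_sub hc a b
  linarith

lemma Fint_diff_le {ρ : ℝ → ℝ} {M : ℝ} (hc : Continuous ρ) (hbd : ∀ z, |ρ z| ≤ M) (a b : ℝ) :
    |Fint ρ b - Fint ρ a| ≤ M * |b - a| := by
  rw [Fint_sub hc a b, ← Real.norm_eq_abs]
  exact intervalIntegral.norm_integral_le_of_norm_le_const fun z _ => hbd z

lemma rho_lip {ρ : ℝ → ℝ} {K : ℝ} (hρdiff : ContDiff ℝ 1 ρ)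
    (hKb : ∀ z ∈ Set.Icc (0:ℝ) 1, |deriv ρ z| ≤ K) {a b : ℝ}
    (ha : a ∈ Set.Icc (0:ℝ) 1) (hb : b ∈ Set.Icc (0:ℝ) 1) :
    |ρ b - ρ a| ≤ K * |b - a| := by
  have := Convex.norm_image_sub_le_of_norm_deriv_le (f := ρ) (s := Set.Icc (0:ℝ) 1)
    (fun z _ => (hρdiff.differentiable one_ne_zero).differentiableAt)
    (fun z hz => by rw [Real.norm_eq_abs]; exact hKb z hz) (convex_Icc _ _) ha hb
  simpa [Real.norm_eq_abs] using this

lemma rem_bound {ρ : ℝ → ℝ} {K : ℝ} (hρdiff : ContDiff ℝ 1 ρ)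
    (hKb : ∀ z ∈ Set.Icc (0:ℝ) 1, |deriv ρ z| ≤ K) (hK0 : 0 ≤ K) {a b : ℝ}
    (ha : a ∈ Set.Icc (0:ℝ) 1) (hb : b ∈ Set.Icc (0:ℝ) 1) :
    |Fint ρ b - Fint ρ a - ρ a * (b - a)| ≤ K / 2 * (b - a) ^ 2 := by
  have hc : Continuous ρ := hρdiff.continuous
  have hsub : Fint ρ b - Fint ρ a - ρ a * (b - a) = ∫ z in a..b, (ρ z - ρ a) := by
    rw [Fint_sub hc a b, intervalIntegral.integral_sub (hc.intervalIntegrable _ _)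
      (intervalIntegrable_const), intervalIntegral.integral_const]
    simp only [smul_eq_mul]
    ring
  have hIsub : Set.uIoc a b ⊆ Set.Icc (0:ℝ) 1 := by
    intro z hz
    rcases le_total a b with hab | hab
    · rw [Set.uIoc_of_le hab] at hz
      exact ⟨le_trans ha.1 hz.1.le, le_trans hz.2 hb.2⟩
    · rw [Set.uIoc_of_ge hab] at hz
      exact ⟨le_trans hb.1 hz.1.le, le_trans hz.2 ha.2⟩
  have hptwise : ∀ z ∈ Set.uIoc a b, |ρ z - ρ a| ≤ K * |z - a| := fun z hz =>
    rho_lip hρdiff hKb ha (hIsub hz)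
  rw [hsub]
  have hbound : |∫ z in a..b, (ρ z - ρ a)| ≤ |∫ z in a..b, K * abs (z - a)| := by
    rw [← Real.norm_eq_abs (∫ z in a..b, (ρ z - ρ a))]
    refine intervalIntegral.norm_integral_le_abs_of_norm_le ?_
      (((continuous_const.mul ((continuous_id.sub continuous_const).abs))).intervalIntegrable _ _)
    exact MeasureTheory.ae_restrict_of_forall_mem measurableSet_uIoc fun z hz => by
      rw [Real.norm_eq_abs]; exact hptwise z hz
  refine le_trans hbound ?_
  rcases le_total a b with hab | hab
  · have hcongr : (∫ z in a..b, K * abs (z - a)) = ∫ z in a..b, K * (z - a) := by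
      refine intervalIntegral.integral_congr fun z hz => ?_
      rw [Set.uIcc_of_le hab] at hz
      rw [abs_of_nonneg (by linarith [hz.1])]
    rw [hcongr, intervalIntegral.integral_const_mul]
    have hid : (∫ z in a..b, (z - a)) = ((b - a) ^ 2) / 2 := by
      rw [intervalIntegral.integral_comp_sub_right (fun z => z) a, sub_self, integral_id]
      ring
    rw [hid, abs_of_nonneg (by positivity)]
    ring_nf
    exact le_refl _
  · have hcongr : (∫ z in a..b, K * abs (z - a)) = ∫ z in a..b, K * (a - z) := by
      refine intervalIntegral.integral_congr fun z hz => ?_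
      rw [Set.uIcc_of_ge hab] at hz
      rw [abs_of_nonpos (by linarith [hz.2]), neg_sub]
    rw [hcongr, intervalIntegral.integral_const_mul]
    have hid : (∫ z in a..b, (a - z)) = -(((a - b) ^ 2) / 2) := by
      rw [intervalIntegral.integral_comp_sub_left (fun z => z) a, sub_self, integral_id]
      ring
    rw [hid]
    have : K * -((a - b) ^ 2 / 2) ≤ 0 := by
      have : 0 ≤ (a - b) ^ 2 / 2 := by positivity
      nlinarith
    rw [abs_of_nonpos this]
    nlinarith [sq_nonneg (a - b), sq_nonneg (b - a)]

end Stmt11Aux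

namespace Stmt11Aux

noncomputable def projCLM (n : ℕ) (j : Fin (n + 1)) :
    EuclideanSpace ℝ (Fin (n + 1)) →L[ℝ] ℝ :=
  EuclideanSpace.proj j

@[simp] lemma projCLM_apply (n : ℕ) (j : Fin (n + 1)) (y : EuclideanSpace ℝ (Fin (n + 1))) :
    projCLM n j y = y j := by
  simp [projCLM]

lemma sq_hasFDerivAt {E : Type*} [NormedAddCommGroup E] [NormedSpace ℝ E]
    {f : E → ℝ} {f' : E →L[ℝ] ℝ} {x : E} (hf : HasFDerivAt f f' x) :
    HasFDerivAt (fun y => f y ^ 2) ((2 * f x) • f') x := by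
  have h := hf.mul hf
  simp only [pow_two]
  rw [two_mul, add_smul]
  exact h

end Stmt11Aux

/-- If `ρ` is continuously differentiable and
`K = ‖ρ'‖_∞ = sup_{z ∈ [0,1]} |ρ'(z)|`, then for any two monotone configurations
`x, x' ∈ [0,1]ⁿ`,
`Q(x') ≤ Q(x) + ⟨∇Q(x), x' - x⟩ + (4ρ_max² + 2‖ρ'‖_∞ ρ_max)·‖x' - x‖₂²`. -/
theorem stmt11 (n : ℕ) (ρ : ℝ → ℝ) (ρmax : ℝ) (hρmax : 1 ≤ ρmax)
    (hρdiff : ContDiff ℝ 1 ρ) (hρ : ∀ z, 1 ≤ ρ z ∧ ρ z ≤ ρmax)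
    (K : ℝ) (hK : K = ⨆ z : Set.Icc (0 : ℝ) 1, |deriv ρ (z : ℝ)|) :
    ∀ x x' : EuclideanSpace ℝ (Fin (n + 1)),
      (∀ i, x i ∈ Set.Icc (0 : ℝ) 1) → (∀ i j : Fin (n + 1), i ≤ j → x i ≤ x j) →
      (∀ i, x' i ∈ Set.Icc (0 : ℝ) 1) → (∀ i j : Fin (n + 1), i ≤ j → x' i ≤ x' j) →
      Qfun ρ n x' ≤ Qfun ρ n x + ⟪gradient (Qfun ρ n) x, x' - x⟫
        + (4 * ρmax ^ 2 + 2 * K * ρmax) * ‖x' - x‖ ^ 2 := by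
  intro x x' hx hmx hx' hmx'
  have hρc : Continuous ρ := hρdiff.continuous
  have hKb : ∀ z ∈ Set.Icc (0:ℝ) 1, |deriv ρ z| ≤ K := by
    intro z hz
    rw [hK]
    have hbdd : BddAbove (Set.range fun z : Set.Icc (0:ℝ) 1 => |deriv ρ (z:ℝ)|) := by
      have hcd : Continuous fun z : Set.Icc (0:ℝ) 1 => |deriv ρ (z:ℝ)| :=
        ((hρdiff.continuous_deriv le_rfl).abs).comp continuous_subtype_val
      exact (isCompact_range hcd).bddAbove
    exact le_ciSup hbdd ⟨z, hz⟩
  have hK0 : 0 ≤ K := le_trans (abs_nonneg _) (hKb 0 (by norm_num))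
  have hρmax0 : (0:ℝ) < ρmax := lt_of_lt_of_le one_pos hρmax
  have hρabs : ∀ z, |ρ z| ≤ ρmax := fun z =>
    abs_le.mpr ⟨by linarith [(hρ z).1], (hρ z).2⟩
  have hFint0 : Fint ρ 0 = 0 := intervalIntegral.integral_same
  -- the derivative of Qfun at x
  have hFd : ∀ t, HasDerivAt (Fint ρ) (ρ t) t := Stmt11Aux.Fint_hasDerivAt hρc
  have hp : ∀ j : Fin (n+1), HasFDerivAt (E := EuclideanSpace ℝ (Fin (n+1))) (F := ℝ)
      (fun y => y j) (Stmt11Aux.projCLM n j) x :=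
    fun j => (Stmt11Aux.projCLM n j).hasFDerivAt
  have hcoord : ∀ j : Fin (n+1), HasFDerivAt
      (fun y : EuclideanSpace ℝ (Fin (n+1)) => Fint ρ (y j))
      (ρ (x j) • Stmt11Aux.projCLM n j) x :=
    fun j => (hFd (x j)).comp_hasFDerivAt (h₂ := Fint ρ) x (hp j)
  set L : EuclideanSpace ℝ (Fin (n+1)) →L[ℝ] ℝ :=
    (2:ℝ) • ((2 * Fint ρ (x 0)) • (ρ (x 0) • Stmt11Aux.projCLM n 0))
    + (∑ i : Fin n, (2 * (Fint ρ (x i.succ) - Fint ρ (x i.castSucc))) •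
        (ρ (x i.succ) • Stmt11Aux.projCLM n i.succ
          - ρ (x i.castSucc) • Stmt11Aux.projCLM n i.castSucc))
    + (2:ℝ) • ((2 * (Fint ρ 1 - Fint ρ (x (Fin.last n)))) •
        (0 - ρ (x (Fin.last n)) • Stmt11Aux.projCLM n (Fin.last n))) with hLdef
  have hQder : HasFDerivAt (Qfun ρ n) L x := by
    have h1 := (Stmt11Aux.sq_hasFDerivAt (hcoord 0)).const_mul (2:ℝ)
    have h2 := HasFDerivAt.fun_sum (u := Finset.univ)
      (fun (i : Fin n) (_ : i ∈ Finset.univ) => Stmt11Aux.sq_hasFDerivAt ((hcoord i.succ).sub (hcoord i.castSucc)))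
    have h3 := (Stmt11Aux.sq_hasFDerivAt
      ((hasFDerivAt_const (Fint ρ 1) x).sub (hcoord (Fin.last n)))).const_mul (2:ℝ)
    exact (h1.add h2).add h3
  have hgrad : ⟪gradient (Qfun ρ n) x, x' - x⟫ = L (x' - x) := by
    have hg : HasGradientAt (Qfun ρ n) ((InnerProductSpace.toDual ℝ _).symm L) x := by
      rw [hasGradientAt_iff_hasFDerivAt, LinearIsometryEquiv.apply_symm_apply]
      exact hQder
    rw [hg.gradient, InnerProductSpace.toDual_symm_apply]
  have hLval : L (x' - x) = 4 * Fint ρ (x 0) * (ρ (x 0) * (x' 0 - x 0))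
      + (∑ i : Fin n, 2 * (Fint ρ (x i.succ) - Fint ρ (x i.castSucc)) *
          (ρ (x i.succ) * (x' i.succ - x i.succ)
            - ρ (x i.castSucc) * (x' i.castSucc - x i.castSucc)))
      - 4 * (Fint ρ 1 - Fint ρ (x (Fin.last n)))
          * (ρ (x (Fin.last n)) * (x' (Fin.last n) - x (Fin.last n))) := by
    simp only [hLdef, ContinuousLinearMap.add_apply, ContinuousLinearMap.smul_apply,
      ContinuousLinearMap.sum_apply, ContinuousLinearMap.sub_apply,
      ContinuousLinearMap.zero_apply, Stmt11Aux.projCLM_apply, smul_eq_mul, PiLp.sub_apply]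
    ring
  have hnorm : ‖x' - x‖ ^ 2 = ∑ j, (x' j - x j) ^ 2 := by
    rw [EuclideanSpace.norm_eq, Real.sq_sqrt (by positivity)]
    exact Finset.sum_congr rfl fun j _ => by
      rw [PiLp.sub_apply, Real.norm_eq_abs, sq_abs]
  -- apply the Stmt11Aux.key inequality
  have hkey := Stmt11Aux.key n (fun j => Fint ρ (x j)) (fun j => Fint ρ (x' j))
    (fun j => ρ (x j) * (x' j - x j)) (Fint ρ 1) ρmax
    (fun j => K / 2 * (x' j - x j) ^ 2) (fun j => ρmax ^ 2 * (x' j - x j) ^ 2)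
    (fun i j hij => Stmt11Aux.Fint_mono hρc (fun z => (hρ z).1) (hmx i j hij))
    (by simpa [hFint0] using Stmt11Aux.Fint_mono hρc (fun z => (hρ z).1) (hx 0).1)
    (Stmt11Aux.Fint_mono hρc (fun z => (hρ z).1) (hx (Fin.last n)).2)
    (by
      have h := Stmt11Aux.Fint_diff_le hρc hρabs 0 1
      rw [hFint0] at h
      have := le_abs_self (Fint ρ 1 - 0)
      simp only [sub_zero] at h this
      simpa using le_trans this (by simpa using h))
    hρmax0.le
    (fun j => Stmt11Aux.rem_bound hρdiff hKb hK0 (hx j) (hx' j))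
    (fun j => by
      have h := Stmt11Aux.Fint_diff_le hρc hρabs (x j) (x' j)
      calc (Fint ρ (x' j) - Fint ρ (x j)) ^ 2
          = |Fint ρ (x' j) - Fint ρ (x j)| ^ 2 := (sq_abs _).symm
        _ ≤ (ρmax * |x' j - x j|) ^ 2 :=
            pow_le_pow_left₀ (abs_nonneg _) h 2
        _ = ρmax ^ 2 * (x' j - x j) ^ 2 := by rw [mul_pow, sq_abs])
  simp only [] at hkey
  have harith : (∑ j : Fin (n+1), 4 * ρmax * (K / 2 * (x' j - x j) ^ 2))
      + 4 * (∑ j : Fin (n+1), ρmax ^ 2 * (x' j - x j) ^ 2)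
      = (4 * ρmax ^ 2 + 2 * K * ρmax) * ∑ j : Fin (n+1), (x' j - x j) ^ 2 := by
    rw [Finset.mul_sum, Finset.mul_sum, ← Finset.sum_add_distrib]
    exact Finset.sum_congr rfl fun j _ => by ring
  rw [hgrad, hLval, hnorm]
  unfold Qfun
  linarith [hkey]
end

section
/- Let n ≥ 1, M ≥ 0, α ∈ [0,1], and let 0 = x₀ ≤ x₁ ≤ ⋯ ≤ xₙ ≤ x_{n+1} = 1. Suppose for each k = 1,…,n we are given numbers ρ̂ᶜ_k, ρ̂ˡ_k, ρ̂ʳ_k ∈ [0, ρ_max + M], and define L_k = ρ̂ˡ_k·(x_k − x_{k−1}), R_k = ρ̂ʳ_k·(x_{k+1} − x_k), and updated positions x₁' = x₁ − (α ρ̂ᶜ₁ / (8(ρ_max + M)²))·(2L₁ − R₁), x_k' = x_k − (α ρ̂ᶜ_k / (8(ρ_max + M)²))·(L_k − R_k) for 2 ≤ k ≤ n−1, and xₙ' = xₙ − (α ρ̂ᶜₙ / (8(ρ_max + M)²))·(Lₙ − 2Rₙ). Then for every k = 1,…,n, (x_{k−1} − x_k)/4 ≤ x_k' − x_k ≤ (x_{k+1}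 − x_k)/4. -/
/-- One-step movement bound for the randomized scalar coverage
protocol.  Agents are `x 1, …, x n` (with `n ≥ 1`), boundary conventions `x 0 = 0`,
`x (n+1) = 1`.  Each agent `k` holds noisy samples `ρc k, ρl k, ρr k ∈ [0, ρmax + M]`,
sets `L k = ρl k ⬝ (x k - x (k-1))`, `R k = ρr k ⬝ (x (k+1) - x k)`, and moves to
`x' k = x k - (α ρc k/(8(ρmax+M)²)) ⬝ (aₖ L k - bₖ R k)` where `aₖ = 2` iff `k = 1`
(else `1`) and `bₖ = 2` iff `k = n` (else `1`); this encodes exactly the update of the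
protocol, including the `n = 1` case `2L₁ - 2R₁`.  Then each agent moves at most a
quarter of the gap toward either neighbor:
`(x (k-1) - x k)/4 ≤ x' k - x k ≤ (x (k+1) - x k)/4`. -/
theorem stmt12 (n : ℕ) (hn : 1 ≤ n) (ρmax M α : ℝ) (hρmax : 1 ≤ ρmax) (hM : 0 ≤ M)
    (hα0 : 0 ≤ α) (hα1 : α ≤ 1)
    (x : ℕ → ℝ) (hx0 : x 0 = 0) (hxlast : x (n + 1) = 1)
    (hmono : ∀ k ≤ n, x k ≤ x (k + 1))
    (ρc ρl ρr : ℕ → ℝ)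
    (hρc : ∀ k, 1 ≤ k → k ≤ n → ρc k ∈ Set.Icc 0 (ρmax + M))
    (hρl : ∀ k, 1 ≤ k → k ≤ n → ρl k ∈ Set.Icc 0 (ρmax + M))
    (hρr : ∀ k, 1 ≤ k → k ≤ n → ρr k ∈ Set.Icc 0 (ρmax + M))
    (L R : ℕ → ℝ)
    (hL : ∀ k, 1 ≤ k → k ≤ n → L k = ρl k * (x k - x (k - 1)))
    (hR : ∀ k, 1 ≤ k → k ≤ n → R k = ρr k * (x (k + 1) - x k))
    (x' : ℕ → ℝ)
    (hx' : ∀ k, 1 ≤ k → k ≤ n →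
      x' k = x k - (α * ρc k / (8 * (ρmax + M) ^ 2)) *
        ((if k = 1 then (2 : ℝ) else 1) * L k - (if k = n then (2 : ℝ) else 1) * R k)) :
    ∀ k, 1 ≤ k → k ≤ n →
      (x (k - 1) - x k) / 4 ≤ x' k - x k ∧ x' k - x k ≤ (x (k + 1) - x k) / 4 := by
  intro k hk1 hkn
  set P := ρmax + M with hP
  have hP1 : (1:ℝ) ≤ P := by simp [hP]; linarith
  have hP0 : (0:ℝ) < P := by linarith
  obtain ⟨hc0, hc1⟩ := hρc k hk1 hkn
  obtain ⟨hl0, hl1⟩ := hρl k hk1 hkn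
  obtain ⟨hr0, hr1⟩ := hρr k hk1 hkn
  have hgL : 0 ≤ x k - x (k - 1) := by
    have := hmono (k - 1) (by omega)
    have hk : k - 1 + 1 = k := by omega
    rw [hk] at this; linarith
  have hgR : 0 ≤ x (k + 1) - x k := by
    have := hmono k hkn; linarith
  set A := (if k = 1 then (2:ℝ) else 1) with hAdef
  set B := (if k = n then (2:ℝ) else 1) with hBdef
  have hA : 1 ≤ A ∧ A ≤ 2 := by rw [hAdef]; split_ifs <;> norm_num
  have hB : 1 ≤ B ∧ B ≤ 2 := by rw [hBdef]; split_ifs <;> norm_num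
  have ht0 : 0 ≤ α * ρc k := mul_nonneg hα0 hc0
  have ht1 : α * ρc k ≤ P := by nlinarith
  have hdiff : x' k - x k =
      (α * ρc k * (B * R k - A * L k)) / (8 * P ^ 2) := by
    rw [hx' k hk1 hkn]; ring
  rw [hdiff, hL k hk1 hkn, hR k hk1 hkn]
  have h8 : (0:ℝ) < 8 * P ^ 2 := by positivity
  have hB0 : (0:ℝ) ≤ B := by linarith [hB.1]
  have hA0 : (0:ℝ) ≤ A := by linarith [hA.1]
  have hBr2 : B * ρr k ≤ 2 * P := mul_le_mul hB.2 hr1 hr0 (by norm_num)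
  have hAl2 : A * ρl k ≤ 2 * P := mul_le_mul hA.2 hl1 hl0 (by norm_num)
  have hBr : α * ρc k * (B * ρr k) ≤ 2 * P ^ 2 := by
    have := mul_le_mul ht1 hBr2 (mul_nonneg hB0 hr0) hP0.le
    nlinarith [this]
  have hAl : α * ρc k * (A * ρl k) ≤ 2 * P ^ 2 := by
    have := mul_le_mul ht1 hAl2 (mul_nonneg hA0 hl0) hP0.le
    nlinarith [this]
  have h2 := mul_le_mul_of_nonneg_right hBr hgR
  have h2' := mul_le_mul_of_nonneg_right hAl hgL
  have h3 : 0 ≤ α * ρc k * (A * ρl k) * (x k - x (k-1)) :=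
    mul_nonneg (mul_nonneg ht0 (mul_nonneg hA0 hl0)) hgL
  have h4 : 0 ≤ α * ρc k * (B * ρr k) * (x (k+1) - x k) :=
    mul_nonneg (mul_nonneg ht0 (mul_nonneg hB0 hr0)) hgR
  constructor
  · rw [div_le_div_iff₀ (by norm_num) h8]
    linarith [h2', h4]
  · rw [div_le_div_iff₀ h8 (by norm_num)]
    linarith [h2, h3]
end

section
/- Let n ≥ 1 and let 0 ≤ x₁ ≤ x₂ ≤ ⋯ ≤ xₙ ≤ 1, with the conventions x₀ = 0 and x_{n+1} = 1. Suppose x₁',…,xₙ' are real numbers satisfying (x_{k−1} − x_k)/4 ≤ x_k' − x_k ≤ (x_{k+1} − x_k)/4 for every k = 1,…,n. Then 0 ≤ x₁' ≤ x₂' ≤ ⋯ ≤ xₙ' ≤ 1. In particular, the randomized scalar coverage protocol preserves the ordering of the agents and keeps them in [0,1] at every step. -/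
/-- (Deterministic core of Proposition 1.)  Let `n ≥ 1` and
`0 = x 0 ≤ x 1 ≤ ⋯ ≤ x n ≤ x (n+1) = 1`.  If each new position satisfies
`(x (k-1) - x k)/4 ≤ x' k - x k ≤ (x (k+1) - x k)/4` for `k = 1,…,n`, then
`0 ≤ x' 1 ≤ x' 2 ≤ ⋯ ≤ x' n ≤ 1`. -/
theorem stmt13 (n : ℕ) (hn : 1 ≤ n)
    (x : ℕ → ℝ) (hx0 : x 0 = 0) (hxlast : x (n + 1) = 1)
    (hmono : ∀ k ≤ n, x k ≤ x (k + 1))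
    (x' : ℕ → ℝ)
    (hstep : ∀ k, 1 ≤ k → k ≤ n →
      (x (k - 1) - x k) / 4 ≤ x' k - x k ∧ x' k - x k ≤ (x (k + 1) - x k) / 4) :
    0 ≤ x' 1 ∧ (∀ k, 1 ≤ k → k < n → x' k ≤ x' (k + 1)) ∧ x' n ≤ 1 := by
  refine ⟨?_, ?_, ?_⟩
  · have h := (hstep 1 le_rfl hn).1
    have h0 : x 0 ≤ x 1 := hmono 0 (Nat.zero_le n)
    simp only [Nat.sub_self] at h
    rw [hx0] at h h0
    linarith
  · intro k hk hkn
    have h1 := (hstep k hk (le_of_lt hkn)).2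
    have h2 := (hstep (k + 1) (by omega) hkn).1
    have hmk : x k ≤ x (k + 1) := hmono k (by omega)
    simp only [Nat.add_sub_cancel] at h2
    linarith
  · have h := (hstep n hn le_rfl).2
    have hlast : x n ≤ x (n + 1) := hmono n le_rfl
    rw [hxlast] at h hlast
    linarith
end
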